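/- arXiv:2506.12765 — 10 statements merged into one kernel-verified Lean document; each statement's English description precedes it below -/
import Mathlib

section
/- Assume additionally (Monotonicity) W1 ≥ W0 P-almost surely. Then the first-stage contrast of the instrument on treatment uptake identifies the proportion of compliers: E[W | Z = 1] − E[W | Z = 0] = P(C), where C = {W1 > W0}. -/
/-!
On `{Z = z}` the observed treatment is the potential treatment `W_z`, and since `Z` is independent
of `W_z`, conditioning on `{Z = z}` does not change its mean: the first-stage contrast is
`E[W1] - E[W0] = E[W1 - W0]`. Under monotonicity the binary variable `W1 - W0` is almost surely
the indicator of the complier event.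
-/

open MeasureTheory ProbabilityTheory

/-- Conditional mean given an event: `E[U | A] := E[U · 1_A] / P(A)`. -/
noncomputable def condMean {Ω : Type*} [MeasurableSpace Ω] (P : Measure Ω)
    (U : Ω → ℝ) (A : Set Ω) : ℝ :=
  (∫ ω in A, U ω ∂P) / (P A).toReal

section

variable {Ω : Type*} [MeasurableSpace Ω] {P : Measure Ω}

lemma condMean_congr {U V : Ω → ℝ} {A : Set Ω} (hA : MeasurableSet A) (h : Set.EqOn U V A) :
    condMean P U A = condMean P V A := by
  rw [condMean, condMean, setIntegral_congr_fun hA h]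

lemma condMean_preimage_eq_integral_of_indepFun [IsFiniteMeasure P] {β : Type*}
    [MeasurableSpace β] {Z : Ω → β} {V : Ω → ℝ} (hZ : Measurable Z) (hV : AEMeasurable V P)
    (hind : IndepFun Z V P) {S : Set β} (hS : MeasurableSet S) (hS₀ : P (Z ⁻¹' S) ≠ 0) :
    condMean P V (Z ⁻¹' S) = ∫ ω, V ω ∂P := by
  have hprod : ∫ ω in Z ⁻¹' S, V ω ∂P = P.real (Z ⁻¹' S) * ∫ ω, V ω ∂P :=
    Indep.setIntegral_eq_mul (f := id) hZ.comap_le ((IndepFun_iff_Indep _ _ _).1 hind) hV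
      ⟨S, hS, rfl⟩ aestronglyMeasurable_id
  have hpos : P.real (Z ⁻¹' S) ≠ 0 := (measureReal_ne_zero_iff (measure_ne_top _ _)).2 hS₀
  rw [condMean, hprod, ← measureReal_def, mul_div_cancel_left₀ _ hpos]

lemma integral_sub_eq_measureReal_setOf_lt [IsFiniteMeasure P] {W₀ W₁ : Ω → ℝ}
    (hW₀ : Measurable W₀) (hW₁ : Measurable W₁)
    (hW₀bin : ∀ ω, W₀ ω = 0 ∨ W₀ ω = 1) (hW₁bin : ∀ ω, W₁ ω = 0 ∨ W₁ ω = 1)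
    (hmono : W₀ ≤ᵐ[P] W₁) :
    ∫ ω, W₁ ω ∂P - ∫ ω, W₀ ω ∂P = P.real {ω | W₀ ω < W₁ ω} := by
  have integrable_of_binary {V : Ω → ℝ} (hV : Measurable V) (hbin : ∀ ω, V ω = 0 ∨ V ω = 1) :
      Integrable V P :=
    .of_bound hV.aestronglyMeasurable 1 <| ae_of_all _ fun ω => by
      rcases hbin ω with h | h <;> simp [h]
  have hind : (fun ω => W₁ ω - W₀ ω) =ᵐ[P] {ω | W₀ ω < W₁ ω}.indicator 1 := by
    filter_upwards [hmono] with ω hle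
    rcases hW₀bin ω with h₀ | h₀ <;> rcases hW₁bin ω with h₁ | h₁ <;>
      simp [Set.indicator, h₀, h₁] at hle ⊢
    linarith
  rw [← integral_sub (integrable_of_binary hW₁ hW₁bin) (integrable_of_binary hW₀ hW₀bin),
    integral_congr_ae hind, integral_indicator_one (measurableSet_lt hW₀ hW₁)]

end

theorem first_stage_identifies_complier_share_general
    {Ω : Type*} [MeasurableSpace Ω] (P : Measure Ω) [IsProbabilityMeasure P]
    (Z W0 W1 Y0 Y1 : Ω → ℝ)
    (hZ : Measurable Z) (hW0 : Measurable W0) (hW1 : Measurable W1)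
    (hZbin : ∀ ω, Z ω = 0 ∨ Z ω = 1)
    (hW0bin : ∀ ω, W0 ω = 0 ∨ W0 ω = 1)
    (hW1bin : ∀ ω, W1 ω = 0 ∨ W1 ω = 1)
    (W : Ω → ℝ)
    (hWdef : ∀ ω, W ω = Z ω * W1 ω + (1 - Z ω) * W0 ω)
    (hindep : IndepFun Z (fun ω => (Y0 ω, Y1 ω, W0 ω, W1 ω)) P)
    (hoverlap : 0 < P {ω | Z ω = 1} ∧ P {ω | Z ω = 1} < 1)
    (hmono : ∀ᵐ ω ∂P, W0 ω ≤ W1 ω) :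
    condMean P W {ω | Z ω = 1} - condMean P W {ω | Z ω = 0}
      = (P {ω | W0 ω < W1 ω}).toReal := by
  have hZW0 : IndepFun Z W0 P :=
    hindep.comp (ψ := fun p : ℝ × ℝ × ℝ × ℝ => p.2.2.1) measurable_id (by fun_prop)
  have hZW1 : IndepFun Z W1 P :=
    hindep.comp (ψ := fun p : ℝ × ℝ × ℝ × ℝ => p.2.2.2) measurable_id (by fun_prop)
  have hmeas (z : ℝ) : MeasurableSet {ω | Z ω = z} := hZ (measurableSet_singleton z)
  have hZ₀ : P {ω | Z ω = 0} ≠ 0 := by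
    have hcompl : {ω | Z ω = 0} = {ω | Z ω = 1}ᶜ := by
      ext ω; rcases hZbin ω with h | h <;> simp [h]
    rw [hcompl, prob_compl_eq_one_sub (hmeas 1)]
    exact (tsub_pos_of_lt hoverlap.2).ne'
  have hcond₁ : condMean P W {ω | Z ω = 1} = ∫ ω, W1 ω ∂P := by
    rw [condMean_congr (V := W1) (hmeas 1) fun ω (hω : Z ω = 1) => by simp [hWdef, hω]]
    exact condMean_preimage_eq_integral_of_indepFun hZ hW1.aemeasurable hZW1
      (measurableSet_singleton 1) hoverlap.1.ne'
  have hcond₀ : condMean P W {ω | Z ω = 0} = ∫ ω, W0 ω ∂P := by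
    rw [condMean_congr (V := W0) (hmeas 0) fun ω (hω : Z ω = 0) => by simp [hWdef, hω]]
    exact condMean_preimage_eq_integral_of_indepFun hZ hW0.aemeasurable hZW0
      (measurableSet_singleton 0) hZ₀
  rw [hcond₁, hcond₀]
  exact integral_sub_eq_measureReal_setOf_lt hW0 hW1 hW0bin hW1bin hmono

/-- Under independence/exclusion, overlap and monotonicity, the first-stage contrast
`E[W | Z = 1] − E[W | Z = 0]` identifies the proportion of compliers `P(W1 > W0)`. -/
theorem first_stage_identifies_complier_share
    {Ω : Type*} [MeasurableSpace Ω] (P : Measure Ω) [IsProbabilityMeasure P]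
    (Z W0 W1 Y0 Y1 : Ω → ℝ)
    (hZ : Measurable Z) (hW0 : Measurable W0) (hW1 : Measurable W1)
    (hY0 : Measurable Y0) (hY1 : Measurable Y1)
    (hZbin : ∀ ω, Z ω = 0 ∨ Z ω = 1)
    (hW0bin : ∀ ω, W0 ω = 0 ∨ W0 ω = 1)
    (hW1bin : ∀ ω, W1 ω = 0 ∨ W1 ω = 1)
    (W Y : Ω → ℝ)
    (hWdef : ∀ ω, W ω = Z ω * W1 ω + (1 - Z ω) * W0 ω)
    (hYdef : ∀ ω, Y ω = W ω * Y1 ω + (1 - W ω) * Y0 ω)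
    (hindep : IndepFun Z (fun ω => (Y0 ω, Y1 ω, W0 ω, W1 ω)) P)
    (hoverlap : 0 < P {ω | Z ω = 1} ∧ P {ω | Z ω = 1} < 1)
    (hmono : ∀ᵐ ω ∂P, W0 ω ≤ W1 ω) :
    condMean P W {ω | Z ω = 1} - condMean P W {ω | Z ω = 0}
      = (P {ω | W0 ω < W1 ω}).toReal :=
  first_stage_identifies_complier_share_general P Z W0 W1 Y0 Y1 hZ hW0 hW1 hZbin hW0bin hW1bin W
    hWdef hindep hoverlap hmono
end

section
/- For always-takers and never-takers the instrument has no effect on the outcome distribution: for every y ∈ ℝ, E[1{Y ≤ y}·1{W1 = W0} | Z = 1] = E[1{Y ≤ y}·1{W1 = W0} | Z = 0]. -/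
/-!
On the non-compliers `{W1 = W0}` the observed treatment is `W0` whatever the value of `Z`, so
the integrand `1{Y ≤ y} · 1{W1 = W0}` is a measurable function of `(Y0, Y1, W0, W1)` alone.
By independence, its mean over `{Z = z}` is `P(Z = z)` times its unconditional mean, so both
conditional means equal that unconditional mean; overlap and binarity of `Z` make
`P(Z = 1)` and `P(Z = 0)` positive.
-/

open MeasureTheory ProbabilityTheory

section Independence

variable {Ω α β : Type*} [MeasurableSpace Ω] {μ : Measure Ω} [MeasurableSpace α]
  [MeasurableSpace β] {X : Ω → α} {V : Ω → β} {s : Set α} {g : β → ℝ}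

lemma ProbabilityTheory.IndepFun.setIntegral_preimage_comp (h : IndepFun X V μ)
    (hX : Measurable X) (hV : AEMeasurable V μ) (hs : MeasurableSet s) (hg : Measurable g) :
    ∫ ω in X ⁻¹' s, g (V ω) ∂μ = μ.real (X ⁻¹' s) * ∫ ω, g (V ω) ∂μ := by
  have hψ : Measurable (s.indicator (fun _ => (1 : ℝ))) := measurable_const.indicator hs
  calc ∫ ω in X ⁻¹' s, g (V ω) ∂μ
      = ∫ ω, (s.indicator (fun _ => (1 : ℝ)) ∘ X * g ∘ V) ω ∂μ := by
        rw [← integral_indicator (hX hs)]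
        congr 1 with ω
        by_cases hω : X ω ∈ s <;> simp [Set.indicator, hω]
    _ = (∫ ω, s.indicator (fun _ => (1 : ℝ)) (X ω) ∂μ) * ∫ ω, g (V ω) ∂μ :=
        (h.comp hψ hg).integral_mul_eq_mul_integral
          (hψ.comp hX).aestronglyMeasurable (hg.comp_aemeasurable hV).aestronglyMeasurable
    _ = μ.real (X ⁻¹' s) * ∫ ω, g (V ω) ∂μ := by
        rw [← integral_indicator_one (hX hs)]
        rfl

lemma ProbabilityTheory.IndepFun.condMean_preimage_comp [IsFiniteMeasure μ]
    (h : IndepFun X V μ) (hX : Measurable X) (hV : AEMeasurable V μ) (hs : MeasurableSet s)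
    (hg : Measurable g) (hpos : μ (X ⁻¹' s) ≠ 0) :
    condMean μ (fun ω => g (V ω)) (X ⁻¹' s) = ∫ ω, g (V ω) ∂μ := by
  rw [condMean, h.setIntegral_preimage_comp hX hV hs hg, ← measureReal_def,
    mul_div_cancel_left₀ _ ((measureReal_ne_zero_iff (measure_ne_top μ _)).mpr hpos)]

end Independence

/-- `1{Y ≤ y} · 1{W1 = W0}` as a function of `(Y0, Y1, W0, W1)`, with `W` replaced by `W0`. -/
noncomputable def noncomplierIndicator (y : ℝ) (p : ℝ × ℝ × ℝ × ℝ) : ℝ :=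
  (if p.2.2.1 * p.2.1 + (1 - p.2.2.1) * p.1 ≤ y then 1 else 0) *
    (if p.2.2.2 = p.2.2.1 then 1 else 0)

lemma measurable_noncomplierIndicator (y : ℝ) : Measurable (noncomplierIndicator y) :=
  (Measurable.ite (measurableSet_le (by fun_prop) measurable_const) measurable_const
    measurable_const).mul
    (Measurable.ite (measurableSet_eq_fun (by fun_prop) (by fun_prop)) measurable_const
      measurable_const)

lemma observed_indicator_eq_noncomplierIndicator (y z w0 w1 y0 y1 : ℝ) :
    (if (z * w1 + (1 - z) * w0) * y1 + (1 - (z * w1 + (1 - z) * w0)) * y0 ≤ y then (1 : ℝ)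
      else 0) * (if w1 = w0 then (1 : ℝ) else 0) =
    noncomplierIndicator y (y0, y1, w0, w1) := by
  by_cases hw : w1 = w0
  · have hW : z * w0 + (1 - z) * w0 = w0 := by ring
    simp only [noncomplierIndicator, hw, hW]
  · simp only [noncomplierIndicator, if_neg hw, mul_zero]

theorem instrument_no_effect_on_noncompliers_general
    {Ω : Type*} [MeasurableSpace Ω] (P : Measure Ω) [IsProbabilityMeasure P]
    (Z W0 W1 Y0 Y1 : Ω → ℝ)
    (hZ : Measurable Z) (hW0 : Measurable W0) (hW1 : Measurable W1)
    (hY0 : Measurable Y0) (hY1 : Measurable Y1)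
    (hZbin : ∀ ω, Z ω = 0 ∨ Z ω = 1)
    (W Y : Ω → ℝ)
    (hWdef : ∀ ω, W ω = Z ω * W1 ω + (1 - Z ω) * W0 ω)
    (hYdef : ∀ ω, Y ω = W ω * Y1 ω + (1 - W ω) * Y0 ω)
    (hindep : IndepFun Z (fun ω => (Y0 ω, Y1 ω, W0 ω, W1 ω)) P)
    (hoverlap : 0 < P {ω | Z ω = 1} ∧ P {ω | Z ω = 1} < 1) :
    ∀ y : ℝ,
      condMean P
          (fun ω => (if Y ω ≤ y then (1 : ℝ) else 0) * (if W1 ω = W0 ω then (1 : ℝ) else 0))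
          {ω | Z ω = 1}
      = condMean P
          (fun ω => (if Y ω ≤ y then (1 : ℝ) else 0) * (if W1 ω = W0 ω then (1 : ℝ) else 0))
          {ω | Z ω = 0} := by
  intro y
  have hV : AEMeasurable (fun ω => (Y0 ω, Y1 ω, W0 ω, W1 ω)) P := by fun_prop
  have hZ0 : P (Z ⁻¹' {0}) ≠ 0 := by
    have hcompl : Z ⁻¹' {0} = (Z ⁻¹' {1})ᶜ := by
      ext ω
      rcases hZbin ω with h | h <;> simp [h]
    rw [hcompl, prob_compl_eq_one_sub (hZ (measurableSet_singleton 1))]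
    exact (tsub_pos_of_lt hoverlap.2).ne'
  simp_rw [hYdef, hWdef, observed_indicator_eq_noncomplierIndicator]
  exact (hindep.condMean_preimage_comp hZ hV (measurableSet_singleton 1)
      (measurable_noncomplierIndicator y) hoverlap.1.ne').trans
    (hindep.condMean_preimage_comp hZ hV (measurableSet_singleton 0)
      (measurable_noncomplierIndicator y) hZ0).symm

/-- For always-takers and never-takers (`W1 = W0`), the instrument has no effect on the
outcome distribution. -/
theorem instrument_no_effect_on_noncompliers
    {Ω : Type*} [MeasurableSpace Ω] (P : Measure Ω) [IsProbabilityMeasure P]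
    (Z W0 W1 Y0 Y1 : Ω → ℝ)
    (hZ : Measurable Z) (hW0 : Measurable W0) (hW1 : Measurable W1)
    (hY0 : Measurable Y0) (hY1 : Measurable Y1)
    (hZbin : ∀ ω, Z ω = 0 ∨ Z ω = 1)
    (hW0bin : ∀ ω, W0 ω = 0 ∨ W0 ω = 1)
    (hW1bin : ∀ ω, W1 ω = 0 ∨ W1 ω = 1)
    (W Y : Ω → ℝ)
    (hWdef : ∀ ω, W ω = Z ω * W1 ω + (1 - Z ω) * W0 ω)
    (hYdef : ∀ ω, Y ω = W ω * Y1 ω + (1 - W ω) * Y0 ω)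
    (hindep : IndepFun Z (fun ω => (Y0 ω, Y1 ω, W0 ω, W1 ω)) P)
    (hoverlap : 0 < P {ω | Z ω = 1} ∧ P {ω | Z ω = 1} < 1) :
    ∀ y : ℝ,
      condMean P
          (fun ω => (if Y ω ≤ y then (1 : ℝ) else 0) * (if W1 ω = W0 ω then (1 : ℝ) else 0))
          {ω | Z ω = 1}
      = condMean P
          (fun ω => (if Y ω ≤ y then (1 : ℝ) else 0) * (if W1 ω = W0 ω then (1 : ℝ) else 0))
          {ω | Z ω = 0} :=
  instrument_no_effect_on_noncompliers_general P Z W0 W1 Y0 Y1 hZ hW0 hW1 hY0 hY1 hZbin W Y hWdef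
    hYdef hindep hoverlap
end

section
/- Assume additionally (Monotonicity) W1 ≥ W0 P-almost surely, and that Y0 and Y1 are integrable. Then the intent-to-treat effect on the outcome equals the total complier treatment effect (the Imbens–Angrist LATE decomposition): E[Y | Z = 1] − E[Y | Z = 0] = E[(Y1 − Y0)·1_C]. -/
/-!
Since `Z` is independent of `(Y0, Y1, W0, W1)`, conditioning on `{Z = z}` does not change the
law of the potential quantities, so `E[Y | Z = z]` is the plain mean of the outcome realized
under the treatment `W_z`. The ITT effect is therefore `E[(W1 - W0)(Y1 - Y0)]`, and for binary
treatments with `W0 ≤ W1` the difference `W1 - W0` is the indicator of the compliers.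
-/

open MeasureTheory ProbabilityTheory

def realizedOutcome {Ω : Type*} (W Y0 Y1 : Ω → ℝ) (ω : Ω) : ℝ :=
  W ω * Y1 ω + (1 - W ω) * Y0 ω

lemma realizedOutcome_sub_realizedOutcome_eq_indicator {Ω : Type*} {W0 W1 Y0 Y1 : Ω → ℝ}
    {ω : Ω} (hW0 : W0 ω = 0 ∨ W0 ω = 1) (hW1 : W1 ω = 0 ∨ W1 ω = 1) (hle : W0 ω ≤ W1 ω) :
    realizedOutcome W1 Y0 Y1 ω - realizedOutcome W0 Y0 Y1 ω
      = {ω | W0 ω < W1 ω}.indicator (fun ω => Y1 ω - Y0 ω) ω := by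
  rcases hW0 with h0 | h0 <;> rcases hW1 with h1 | h1 <;>
    simp [realizedOutcome, h0, h1] at hle ⊢
  all_goals linarith

section

variable {Ω : Type*} [MeasurableSpace Ω] {P : Measure Ω}

lemma setIntegral_preimage_eq_measureReal_mul_integral {β : Type*} [MeasurableSpace β]
    {Z : Ω → β} {X : Ω → ℝ} {S : Set β} (hZ : Measurable Z) (hS : MeasurableSet S)
    (hX : AEStronglyMeasurable X P) (hindep : IndepFun Z X P) :
    ∫ ω in Z ⁻¹' S, X ω ∂P = P.real (Z ⁻¹' S) * ∫ ω, X ω ∂P := by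
  have hφ : Measurable (S.indicator (1 : β → ℝ)) := measurable_one.indicator hS
  have hind : IndepFun (S.indicator 1 ∘ Z) X P := hindep.comp hφ measurable_id
  calc ∫ ω in Z ⁻¹' S, X ω ∂P = ∫ ω, S.indicator 1 (Z ω) * X ω ∂P := by
        rw [← integral_indicator (hZ hS)]
        congr 1 with ω
        by_cases h : Z ω ∈ S <;> simp [h]
    _ = (∫ ω, S.indicator 1 (Z ω) ∂P) * ∫ ω, X ω ∂P :=
        hind.integral_mul_eq_mul_integral (hφ.comp hZ).aestronglyMeasurable hX
    _ = P.real (Z ⁻¹' S) * ∫ ω, X ω ∂P := by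
        rw [← integral_indicator_one (hZ hS)]
        rfl

lemma condMean_eq_integral_of_indepFun [IsProbabilityMeasure P] {β : Type*}
    [MeasurableSpace β] {Z : Ω → β} {U X : Ω → ℝ} {S : Set β} (hZ : Measurable Z)
    (hS : MeasurableSet S) (hPS : P (Z ⁻¹' S) ≠ 0) (hX : AEStronglyMeasurable X P)
    (hindep : IndepFun Z X P) (hUX : Set.EqOn U X (Z ⁻¹' S)) :
    condMean P U (Z ⁻¹' S) = ∫ ω, X ω ∂P := by
  rw [condMean, setIntegral_congr_fun (hZ hS) hUX,
    setIntegral_preimage_eq_measureReal_mul_integral hZ hS hX hindep, measureReal_def,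
    mul_div_cancel_left₀ _ (ENNReal.toReal_ne_zero.mpr ⟨hPS, measure_ne_top P _⟩)]

lemma integrable_realizedOutcome {W Y0 Y1 : Ω → ℝ} (hW : AEStronglyMeasurable W P)
    (hW01 : ∀ᵐ ω ∂P, W ω ∈ Set.Icc 0 1) (hY0 : Integrable Y0 P) (hY1 : Integrable Y1 P) :
    Integrable (realizedOutcome W Y0 Y1) P := by
  refine (hY1.bdd_mul hW (c := 1) ?_).add
    (hY0.bdd_mul (aestronglyMeasurable_const.sub hW) (c := 1) ?_)
  all_goals
    filter_upwards [hW01] with ω ⟨h0, h1⟩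
    exact abs_le.mpr ⟨by linarith, by linarith⟩

lemma integral_realizedOutcome_sub_eq_setIntegral {W0 W1 Y0 Y1 : Ω → ℝ}
    (hW0 : Measurable W0) (hW1 : Measurable W1)
    (hW0bin : ∀ ω, W0 ω = 0 ∨ W0 ω = 1) (hW1bin : ∀ ω, W1 ω = 0 ∨ W1 ω = 1)
    (hmono : ∀ᵐ ω ∂P, W0 ω ≤ W1 ω)
    (hint0 : Integrable (realizedOutcome W0 Y0 Y1) P)
    (hint1 : Integrable (realizedOutcome W1 Y0 Y1) P) :
    ∫ ω, realizedOutcome W1 Y0 Y1 ω ∂P - ∫ ω, realizedOutcome W0 Y0 Y1 ω ∂P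
      = ∫ ω in {ω | W0 ω < W1 ω}, (Y1 ω - Y0 ω) ∂P := by
  rw [← integral_sub hint1 hint0, ← integral_indicator (measurableSet_lt hW0 hW1)]
  refine integral_congr_ae ?_
  filter_upwards [hmono] with ω hle
  exact realizedOutcome_sub_realizedOutcome_eq_indicator (hW0bin ω) (hW1bin ω) hle

end

theorem itt_equals_total_complier_effect_general
    {Ω : Type*} [MeasurableSpace Ω] (P : Measure Ω) [IsProbabilityMeasure P]
    (Z W0 W1 Y0 Y1 : Ω → ℝ)
    (hZ : Measurable Z) (hW0 : Measurable W0) (hW1 : Measurable W1)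
    (hZbin : ∀ ω, Z ω = 0 ∨ Z ω = 1)
    (hW0bin : ∀ ω, W0 ω = 0 ∨ W0 ω = 1)
    (hW1bin : ∀ ω, W1 ω = 0 ∨ W1 ω = 1)
    (W Y : Ω → ℝ)
    (hWdef : ∀ ω, W ω = Z ω * W1 ω + (1 - Z ω) * W0 ω)
    (hYdef : ∀ ω, Y ω = W ω * Y1 ω + (1 - W ω) * Y0 ω)
    (hindep : IndepFun Z (fun ω => (Y0 ω, Y1 ω, W0 ω, W1 ω)) P)
    (hoverlap : 0 < P {ω | Z ω = 1} ∧ P {ω | Z ω = 1} < 1)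
    (hmono : ∀ᵐ ω ∂P, W0 ω ≤ W1 ω)
    (hY0int : Integrable Y0 P) (hY1int : Integrable Y1 P) :
    condMean P Y {ω | Z ω = 1} - condMean P Y {ω | Z ω = 0}
      = ∫ ω in {ω | W0 ω < W1 ω}, (Y1 ω - Y0 ω) ∂P := by
  have hint : ∀ V : Ω → ℝ, Measurable V → (∀ ω, V ω = 0 ∨ V ω = 1) →
      Integrable (realizedOutcome V Y0 Y1) P := fun V hV hVbin =>
    integrable_realizedOutcome hV.aestronglyMeasurable
      (.of_forall fun ω => by rcases hVbin ω with h | h <;> simp [h]) hY0int hY1int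
  have hP0 : P {ω | Z ω = 0} ≠ 0 := by
    have hcompl : {ω | Z ω = 0} = {ω | Z ω = 1}ᶜ := by
      ext ω; rcases hZbin ω with h | h <;> simp [h]
    rw [hcompl, prob_compl_eq_one_sub (s := {ω | Z ω = 1}) (hZ (measurableSet_singleton 1))]
    exact (tsub_pos_of_lt hoverlap.2).ne'
  have hcond1 : condMean P Y {ω | Z ω = 1} = ∫ ω, realizedOutcome W1 Y0 Y1 ω ∂P :=
    condMean_eq_integral_of_indepFun (S := {1}) hZ (measurableSet_singleton 1)
      hoverlap.1.ne' (hint W1 hW1 hW1bin).aestronglyMeasurable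
      (hindep.comp measurable_id (by fun_prop : Measurable fun p : ℝ × ℝ × ℝ × ℝ =>
        p.2.2.2 * p.2.1 + (1 - p.2.2.2) * p.1))
      (fun ω (h : Z ω = 1) => by simp [hYdef, hWdef, h, realizedOutcome])
  have hcond0 : condMean P Y {ω | Z ω = 0} = ∫ ω, realizedOutcome W0 Y0 Y1 ω ∂P :=
    condMean_eq_integral_of_indepFun (S := {0}) hZ (measurableSet_singleton 0) hP0
      (hint W0 hW0 hW0bin).aestronglyMeasurable
      (hindep.comp measurable_id (by fun_prop : Measurable fun p : ℝ × ℝ × ℝ × ℝ =>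
        p.2.2.1 * p.2.1 + (1 - p.2.2.1) * p.1))
      (fun ω (h : Z ω = 0) => by simp [hYdef, hWdef, h, realizedOutcome])
  rw [hcond1, hcond0]
  exact integral_realizedOutcome_sub_eq_setIntegral hW0 hW1 hW0bin hW1bin hmono
    (hint W0 hW0 hW0bin) (hint W1 hW1 hW1bin)

/-- Imbens–Angrist LATE decomposition: the intent-to-treat effect on the outcome equals the
total complier treatment effect `E[(Y1 − Y0)·1_C]`. -/
theorem itt_equals_total_complier_effect
    {Ω : Type*} [MeasurableSpace Ω] (P : Measure Ω) [IsProbabilityMeasure P]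
    (Z W0 W1 Y0 Y1 : Ω → ℝ)
    (hZ : Measurable Z) (hW0 : Measurable W0) (hW1 : Measurable W1)
    (hY0 : Measurable Y0) (hY1 : Measurable Y1)
    (hZbin : ∀ ω, Z ω = 0 ∨ Z ω = 1)
    (hW0bin : ∀ ω, W0 ω = 0 ∨ W0 ω = 1)
    (hW1bin : ∀ ω, W1 ω = 0 ∨ W1 ω = 1)
    (W Y : Ω → ℝ)
    (hWdef : ∀ ω, W ω = Z ω * W1 ω + (1 - Z ω) * W0 ω)
    (hYdef : ∀ ω, Y ω = W ω * Y1 ω + (1 - W ω) * Y0 ω)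
    (hindep : IndepFun Z (fun ω => (Y0 ω, Y1 ω, W0 ω, W1 ω)) P)
    (hoverlap : 0 < P {ω | Z ω = 1} ∧ P {ω | Z ω = 1} < 1)
    (hmono : ∀ᵐ ω ∂P, W0 ω ≤ W1 ω)
    (hY0int : Integrable Y0 P) (hY1int : Integrable Y1 P) :
    condMean P Y {ω | Z ω = 1} - condMean P Y {ω | Z ω = 0}
      = ∫ ω in {ω | W0 ω < W1 ω}, (Y1 ω - Y0 ω) ∂P :=
  itt_equals_total_complier_effect_general P Z W0 W1 Y0 Y1 hZ hW0 hW1 hZbin hW0bin hW1bin W Y hWdef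
    hYdef hindep hoverlap hmono hY0int hY1int
end

section
/- For every bounded measurable function g : ℝ × E → ℝ, the instrument-propensity weight satisfies the contrast identity E[H·g(Z, X)] = E[g(1, X) − g(0, X)]. -/
/-!
For binary `Z`, the weighted outcome splits as
`H · g(Z, X) = φ(X) · (Z - π(X)) + (g(1, X) - g(0, X))` with
`φ(x) = g(1, x) / π(x) + g(0, x) / (1 - π(x))`.
Since `π(X) = E[Z | X]`, the residual `Z - π(X)` is orthogonal to every bounded
`σ(X)`-measurable variable, so the first term has mean zero.
-/

open MeasureTheory ProbabilityTheory

theorem integral_mul_sub_condExp_eq_zero {Ω : Type*} {m m₀ : MeasurableSpace Ω}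
    {μ : Measure Ω} [IsFiniteMeasure μ] (hm : m ≤ m₀) {f Z : Ω → ℝ} {c : ℝ}
    (hf : StronglyMeasurable[m] f) (hfc : ∀ᵐ ω ∂μ, ‖f ω‖ ≤ c) (hZ : Integrable Z μ) :
    ∫ ω, f ω * (Z ω - μ[Z | m] ω) ∂μ = 0 := by
  have hpull : μ[f * Z | m] =ᵐ[μ] f * μ[Z | m] :=
    condExp_stronglyMeasurable_mul_of_bound hm hf hZ c hfc
  have hfZ : Integrable (f * Z) μ := hZ.bdd_mul (hf.mono hm).aestronglyMeasurable hfc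
  have hfZcond : Integrable (f * μ[Z | m]) μ := integrable_condExp.congr hpull
  calc ∫ ω, f ω * (Z ω - μ[Z | m] ω) ∂μ = ∫ ω, (f * Z) ω ∂μ - ∫ ω, (f * μ[Z | m]) ω ∂μ := by
        simp_rw [mul_sub]; exact integral_sub hfZ hfZcond
    _ = 0 := by rw [← integral_condExp hm, integral_congr_ae hpull, sub_self]

theorem propensity_weight_mul_eq {z p : ℝ} (hz : z = 0 ∨ z = 1) (hp : p ≠ 0) (hp' : 1 - p ≠ 0)
    (a : ℝ → ℝ) :
    (z - p) / (p * (1 - p)) * a z = (a 1 / p + a 0 / (1 - p)) * (z - p) + (a 1 - a 0) := by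
  rcases hz with rfl | rfl <;> field_simp <;> ring

theorem abs_div_add_div_one_sub_le {a b p C ε : ℝ} (ha : |a| ≤ C) (hb : |b| ≤ C) (hε : 0 < ε)
    (hp : ε ≤ p ∧ p ≤ 1 - ε) : |a / p + b / (1 - p)| ≤ C / ε + C / ε := by
  have hC : 0 ≤ C := (abs_nonneg a).trans ha
  have hdiv {x q : ℝ} (hx : |x| ≤ C) (hq : ε ≤ q) : |x / q| ≤ C / ε := by
    rw [abs_div, abs_of_pos (hε.trans_le hq)]
    exact div_le_div₀ hC hx hε hq
  exact (abs_add_le _ _).trans (add_le_add (hdiv ha hp.1) (hdiv hb (by linarith)))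

/-- For every bounded measurable `g : ℝ × E → ℝ`, the instrument-propensity weight satisfies
`E[H·g(Z, X)] = E[g(1, X) − g(0, X)]`. -/
theorem propensity_weight_contrast_identity
    {Ω E : Type*} [MeasurableSpace Ω] [mE : MeasurableSpace E]
    (P : Measure Ω) [IsProbabilityMeasure P]
    (X : Ω → E) (hX : Measurable X)
    (Z : Ω → ℝ) (hZ : Measurable Z) (hZbin : ∀ ω, Z ω = 0 ∨ Z ω = 1)
    (ε : ℝ) (hε : 0 < ε ∧ ε < 1 / 2)
    (π : E → ℝ) (hπ : Measurable π) (hπbd : ∀ x, ε ≤ π x ∧ π x ≤ 1 - ε)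
    (hπver : P[Z | MeasurableSpace.comap X mE] =ᵐ[P] fun ω => π (X ω))
    (H : Ω → ℝ) (hH : ∀ ω, H ω = (Z ω - π (X ω)) / (π (X ω) * (1 - π (X ω))))
    (g : ℝ × E → ℝ) (hg : Measurable g) (Cg : ℝ) (hgbd : ∀ p, |g p| ≤ Cg) :
    ∫ ω, H ω * g (Z ω, X ω) ∂P = ∫ ω, (g (1, X ω) - g (0, X ω)) ∂P := by
  set φ : E → ℝ := fun x => g (1, x) / π x + g (0, x) / (1 - π x)
  have hφ : Measurable φ := by fun_prop
  have hφbd (ω : Ω) : ‖φ (X ω)‖ ≤ Cg / ε + Cg / ε :=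
    abs_div_add_div_one_sub_le (hgbd _) (hgbd _) hε.1 (hπbd _)
  have hZπ (ω : Ω) : ‖Z ω - π (X ω)‖ ≤ 1 := by
    have := hπbd (X ω); rw [Real.norm_eq_abs, abs_le]
    rcases hZbin ω with h | h <;> rw [h] <;> constructor <;> linarith
  have hsplit (ω : Ω) :
      H ω * g (Z ω, X ω) = φ (X ω) * (Z ω - π (X ω)) + (g (1, X ω) - g (0, X ω)) := by
    have := hπbd (X ω)
    rw [hH]
    exact propensity_weight_mul_eq (hZbin ω) (by linarith) (by linarith) fun z => g (z, X ω)
  have horth : ∫ ω, φ (X ω) * (Z ω - π (X ω)) ∂P = 0 := by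
    have hZint : Integrable Z P := .of_bound hZ.aestronglyMeasurable 1
      (ae_of_all _ fun ω => by rcases hZbin ω with h | h <;> simp [h])
    rw [← integral_mul_sub_condExp_eq_zero hX.comap_le
      (hφ.comp (comap_measurable X)).stronglyMeasurable (ae_of_all _ hφbd) hZint]
    refine integral_congr_ae ?_
    filter_upwards [hπver] with ω hω
    rw [hω, Function.comp_apply]
  simp_rw [hsplit]
  rw [integral_add, horth, zero_add]
  · exact Integrable.of_bound (by fun_prop) _ (ae_of_all _ fun ω => (norm_mul_le _ _).trans
      (mul_le_mul (hφbd ω) (hZπ ω) (norm_nonneg _) ((norm_nonneg _).trans (hφbd ω))))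
  · exact .of_bound (by fun_prop) (Cg + Cg) (ae_of_all _ fun ω => (norm_sub_le _ _).trans
      (add_le_add (hgbd _) (hgbd _)))
end

section
/- Let W : Ω → ℝ be measurable taking values in {0,1} (observed treatment), and let p : ℝ × E → ℝ be bounded measurable such that p ∘ (Z, X) is a version of the conditional expectation E[W | σ(Z, X)]. Then the weighted first-stage moment identifies the average conditional first-stage effect: E[H·W] = E[p(1, X) − p(0, X)]. -/
open MeasureTheory ProbabilityTheory

/-- Tower-property helper: for bounded-type arguments, `∫ f(T)·Y = ∫ f(T)·q` when `q` is a
version of `E[Y | σ(T)]` and the relevant integrabilities hold. -/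
lemma tower_aux {Ω β : Type*} [mΩ : MeasurableSpace Ω] [mβ : MeasurableSpace β]
    (P : Measure Ω) [IsProbabilityMeasure P]
    (T : Ω → β) (hT : Measurable T) (f : β → ℝ) (hf : Measurable f)
    (Y q : Ω → ℝ) (hY : Integrable Y P)
    (hfY : Integrable (fun ω => f (T ω) * Y ω) P)
    (hver : P[Y | MeasurableSpace.comap T mβ] =ᵐ[P] q) :
    ∫ ω, f (T ω) * Y ω ∂P = ∫ ω, f (T ω) * q ω ∂P := by
  have hm : MeasurableSpace.comap T mβ ≤ mΩ := hT.comap_le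
  set m := MeasurableSpace.comap T mβ
  haveI := isFiniteMeasure_trim (μ := P) hm
  have hsm : StronglyMeasurable[m] (fun ω => f (T ω)) :=
    (hf.comp (Measurable.of_comap_le le_rfl)).stronglyMeasurable
  have h1 : P[(fun ω => f (T ω)) * Y | m] =ᵐ[P] (fun ω => f (T ω)) * P[Y | m] :=
    condExp_mul_of_stronglyMeasurable_left hsm (by exact hfY) hY
  have h2 : ∫ ω, (P[(fun ω => f (T ω)) * Y | m]) ω ∂P = ∫ ω, f (T ω) * Y ω ∂P :=
    integral_condExp (f := (fun ω => f (T ω)) * Y) hm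
  rw [← h2]
  refine integral_congr_ae (h1.trans ?_)
  filter_upwards [hver] with ω hω
  simp only [Pi.mul_apply, hω]

/-- The weighted first-stage moment identifies the average conditional first-stage effect:
`E[H·W] = E[p(1, X) − p(0, X)]`. -/
theorem weighted_first_stage_moment
    {Ω E : Type*} [MeasurableSpace Ω] [mE : MeasurableSpace E]
    (P : Measure Ω) [IsProbabilityMeasure P]
    (X : Ω → E) (hX : Measurable X)
    (Z : Ω → ℝ) (hZ : Measurable Z) (hZbin : ∀ ω, Z ω = 0 ∨ Z ω = 1)
    (ε : ℝ) (hε : 0 < ε ∧ ε < 1 / 2)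
    (π : E → ℝ) (hπ : Measurable π) (hπbd : ∀ x, ε ≤ π x ∧ π x ≤ 1 - ε)
    (hπver : P[Z | MeasurableSpace.comap X mE] =ᵐ[P] fun ω => π (X ω))
    (H : Ω → ℝ) (hH : ∀ ω, H ω = (Z ω - π (X ω)) / (π (X ω) * (1 - π (X ω))))
    (W : Ω → ℝ) (hWm : Measurable W) (hWbin : ∀ ω, W ω = 0 ∨ W ω = 1)
    (p : ℝ × E → ℝ) (hp : Measurable p) (Cp : ℝ) (hpbd : ∀ q, |p q| ≤ Cp)
    (hpver : P[W | MeasurableSpace.comap (fun ω => (Z ω, X ω)) inferInstance]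
      =ᵐ[P] fun ω => p (Z ω, X ω)) :
    ∫ ω, H ω * W ω ∂P = ∫ ω, (p (1, X ω) - p (0, X ω)) ∂P := by
  obtain ⟨hε0, hε12⟩ := hε
  -- basic positivity facts
  have hπpos : ∀ x, 0 < π x := fun x => lt_of_lt_of_le hε0 (hπbd x).1
  have h1πpos : ∀ x, 0 < 1 - π x := fun x => by
    have := (hπbd x).2; linarith
  have hπne : ∀ x, π x ≠ 0 := fun x => ne_of_gt (hπpos x)
  have h1πne : ∀ x, 1 - π x ≠ 0 := fun x => ne_of_gt (h1πpos x)
  -- Ω is nonempty, so Cp ≥ 0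
  have hΩ : Nonempty Ω := by
    by_contra h
    rw [not_nonempty_iff] at h
    have h1 : P Set.univ = 1 := measure_univ
    rw [Set.univ_eq_empty_iff.mpr h] at h1
    simp at h1
  obtain ⟨ω₀⟩ := hΩ
  have hCp0 : 0 ≤ Cp := (abs_nonneg _).trans (hpbd (1, X ω₀))
  -- integrability helper: bounded measurable functions are integrable
  have int_bdd : ∀ (f : Ω → ℝ), Measurable f → ∀ C : ℝ, (∀ ω, |f ω| ≤ C) →
      Integrable f P := fun f hf C hC =>
    ⟨hf.aestronglyMeasurable,
      HasFiniteIntegral.of_bounded (C := C) (ae_of_all _ fun ω => by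
        simpa [Real.norm_eq_abs] using hC ω)⟩
  -- bounds
  have hZabs : ∀ ω, |Z ω| ≤ 1 := fun ω => by rcases hZbin ω with h | h <;> simp [h]
  have hWabs : ∀ ω, |W ω| ≤ 1 := fun ω => by rcases hWbin ω with h | h <;> simp [h]
  -- the weight as a function of (Z, X)
  set fH : ℝ × E → ℝ := fun q => (q.1 - π q.2) / (π q.2 * (1 - π q.2)) with hfH_def
  have hfHm : Measurable fH :=
    (measurable_fst.sub (hπ.comp measurable_snd)).div
      ((hπ.comp measurable_snd).mul (measurable_const.sub (hπ.comp measurable_snd)))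
  have hHeq : ∀ ω, H ω = fH (Z ω, X ω) := fun ω => hH ω
  have hHabs : ∀ ω, |H ω| ≤ 1 / (ε * ε) := by
    intro ω
    rw [hH ω, abs_div]
    have hden : ε * ε ≤ |π (X ω) * (1 - π (X ω))| := by
      rw [abs_of_pos (mul_pos (hπpos _) (h1πpos _))]
      have h1 := (hπbd (X ω)).1
      have h2 := (hπbd (X ω)).2
      nlinarith
    have hnum : |Z ω - π (X ω)| ≤ 1 := by
      have h1 := (hπbd (X ω)).1
      have h2 := (hπbd (X ω)).2
      rcases hZbin ω with h | h <;> rw [h, abs_le] <;> constructor <;> linarith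
    exact div_le_div₀ zero_le_one hnum (by positivity) hden
  -- Step 1: E[H W] = E[H p(Z,X)] by tower property w.r.t. σ(Z,X)
  have hTm : Measurable (fun ω => (Z ω, X ω)) := hZ.prodMk hX
  have hHW_int : Integrable (fun ω => fH (Z ω, X ω) * W ω) P := by
    refine int_bdd _ ((hfHm.comp hTm).mul hWm) (1 / (ε * ε) * 1) fun ω => ?_
    rw [abs_mul, ← hHeq ω]
    exact mul_le_mul (hHabs ω) (hWabs ω) (abs_nonneg _) (by positivity)
  have hW_int : Integrable W P := int_bdd _ hWm 1 hWabs
  have step1 : ∫ ω, H ω * W ω ∂P = ∫ ω, fH (Z ω, X ω) * p (Z ω, X ω) ∂P := by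
    have := tower_aux P (fun ω => (Z ω, X ω)) hTm fH hfHm W
      (fun ω => p (Z ω, X ω)) hW_int hHW_int hpver
    rw [← this]
    exact integral_congr_ae (ae_of_all _ fun ω => by dsimp only; rw [hHeq ω])
  -- Step 2: pointwise decomposition
  set g : E → ℝ := fun x => p (1, x) / π x + p (0, x) / (1 - π x) with hg_def
  have hgm : Measurable g :=
    ((hp.comp (measurable_const.prodMk measurable_id)).div hπ).add
      ((hp.comp (measurable_const.prodMk measurable_id)).div (measurable_const.sub hπ))
  have hgabs : ∀ x, |g x| ≤ Cp / ε + Cp / ε := by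
    intro x
    have h1 : |p (1, x) / π x| ≤ Cp / ε := by
      rw [abs_div, abs_of_pos (hπpos x)]
      exact div_le_div₀ hCp0 (hpbd _) hε0 (hπbd x).1
    have h2 : |p (0, x) / (1 - π x)| ≤ Cp / ε := by
      rw [abs_div, abs_of_pos (h1πpos x)]
      refine div_le_div₀ hCp0 (hpbd _) hε0 ?_
      have := (hπbd x).1; have := (hπbd x).2; linarith
    calc |g x| ≤ |p (1, x) / π x| + |p (0, x) / (1 - π x)| := abs_add_le _ _
      _ ≤ Cp / ε + Cp / ε := add_le_add h1 h2
  have hpt : ∀ ω, fH (Z ω, X ω) * p (Z ω, X ω)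
      = g (X ω) * Z ω - p (0, X ω) / (1 - π (X ω)) := by
    intro ω
    have hπ0 := hπne (X ω)
    have h1π0 := h1πne (X ω)
    rcases hZbin ω with h | h <;> rw [h] <;> simp only [hfH_def, hg_def] <;>
      field_simp <;> ring
  -- integrability of the pieces
  have int_gZ : Integrable (fun ω => g (X ω) * Z ω) P := by
    refine int_bdd _ ((hgm.comp hX).mul hZ) ((Cp / ε + Cp / ε) * 1) fun ω => ?_
    rw [abs_mul]
    exact mul_le_mul (hgabs _) (hZabs ω) (abs_nonneg _) (by positivity)
  have int_p0 : Integrable (fun ω => p (0, X ω) / (1 - π (X ω))) P := by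
    refine int_bdd _ ((hp.comp (measurable_const.prodMk hX)).div
      (measurable_const.sub (hπ.comp hX))) (Cp / ε) fun ω => ?_
    rw [abs_div, abs_of_pos (h1πpos _)]
    refine div_le_div₀ hCp0 (hpbd _) hε0 ?_
    have := (hπbd (X ω)).1; have := (hπbd (X ω)).2; linarith
  have int_gπ : Integrable (fun ω => g (X ω) * π (X ω)) P := by
    refine int_bdd _ ((hgm.comp hX).mul (hπ.comp hX)) ((Cp / ε + Cp / ε) * 1) fun ω => ?_
    rw [abs_mul]
    refine mul_le_mul (hgabs _) ?_ (abs_nonneg _) (by positivity)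
    rw [abs_of_pos (hπpos _)]
    have := (hπbd (X ω)).2; linarith
  -- Step 3: E[g(X) Z] = E[g(X) π(X)] by tower property w.r.t. σ(X)
  have hZ_int : Integrable Z P := int_bdd _ hZ 1 hZabs
  have step3 : ∫ ω, g (X ω) * Z ω ∂P = ∫ ω, g (X ω) * π (X ω) ∂P :=
    tower_aux P X hX g hgm Z (fun ω => π (X ω)) hZ_int int_gZ hπver
  -- put it together
  calc ∫ ω, H ω * W ω ∂P
      = ∫ ω, fH (Z ω, X ω) * p (Z ω, X ω) ∂P := step1
    _ = ∫ ω, (g (X ω) * Z ω - p (0, X ω) / (1 - π (X ω))) ∂P :=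
        integral_congr_ae (ae_of_all _ fun ω => hpt ω)
    _ = (∫ ω, g (X ω) * Z ω ∂P) - ∫ ω, p (0, X ω) / (1 - π (X ω)) ∂P :=
        integral_sub int_gZ int_p0
    _ = (∫ ω, g (X ω) * π (X ω) ∂P) - ∫ ω, p (0, X ω) / (1 - π (X ω)) ∂P := by
        rw [step3]
    _ = ∫ ω, (g (X ω) * π (X ω) - p (0, X ω) / (1 - π (X ω))) ∂P :=
        (integral_sub int_gπ int_p0).symm
    _ = ∫ ω, (p (1, X ω) - p (0, X ω)) ∂P := by
        refine integral_congr_ae (ae_of_all _ fun ω => ?_)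
        have hπ0 := hπne (X ω)
        have h1π0 := h1πne (X ω)
        simp only [hg_def]
        field_simp
        ring
end

section
/- Let Y : Ω → ℝ be measurable (observed outcome) and fix y ∈ ℝ. Let m : ℝ × E → ℝ be bounded measurable such that m ∘ (Z, X) is a version of the conditional expectation E[1{Y ≤ y} | σ(Z, X)] (the true outcome-distribution regression). Then the augmented score is robust to arbitrary misspecification of the outcome regression when the instrument propensity π is correct: for every bounded measurable m̃ : ℝ × E → ℝ, E[H·(1{Y ≤ y} − m̃(Z, X)) + (m̃(1, X) − m̃(0, X))] = E[m(1, X) − m(0, X)]. -/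
open MeasureTheory ProbabilityTheory

/-- The augmented score is robust to arbitrary misspecification of the outcome regression
when the instrument propensity `π` is correct. -/
theorem augmented_score_robust_to_outcome_regression
    {Ω E : Type*} [MeasurableSpace Ω] [mE : MeasurableSpace E]
    (P : Measure Ω) [IsProbabilityMeasure P]
    (X : Ω → E) (hX : Measurable X)
    (Z : Ω → ℝ) (hZ : Measurable Z) (hZbin : ∀ ω, Z ω = 0 ∨ Z ω = 1)
    (ε : ℝ) (hε : 0 < ε ∧ ε < 1 / 2)
    (π : E → ℝ) (hπ : Measurable π) (hπbd : ∀ x, ε ≤ π x ∧ π x ≤ 1 - ε)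
    (hπver : P[Z | MeasurableSpace.comap X mE] =ᵐ[P] fun ω => π (X ω))
    (H : Ω → ℝ) (hH : ∀ ω, H ω = (Z ω - π (X ω)) / (π (X ω) * (1 - π (X ω))))
    (Y : Ω → ℝ) (hYm : Measurable Y) (y : ℝ)
    (m : ℝ × E → ℝ) (hm : Measurable m) (Cm : ℝ) (hmbd : ∀ q, |m q| ≤ Cm)
    (hmver : P[(fun ω => if Y ω ≤ y then (1 : ℝ) else 0) |
        MeasurableSpace.comap (fun ω => (Z ω, X ω)) inferInstance]
      =ᵐ[P] fun ω => m (Z ω, X ω)) :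
    ∀ (mt : ℝ × E → ℝ), Measurable mt → ∀ Cmt : ℝ, (∀ q, |mt q| ≤ Cmt) →
      ∫ ω, (H ω * ((if Y ω ≤ y then (1 : ℝ) else 0) - mt (Z ω, X ω))
          + (mt (1, X ω) - mt (0, X ω))) ∂P
        = ∫ ω, (m (1, X ω) - m (0, X ω)) ∂P := by
  intro mt hmt Cmt hmtbd
  obtain ⟨hε0, hε12⟩ := hε
  have hΩ : Nonempty Ω := by
    by_contra h
    have h0 : P Set.univ = 0 := by
      rw [Set.univ_eq_empty_iff.mpr (not_nonempty_iff.mp h)]; simp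
    rw [measure_univ] at h0; exact one_ne_zero h0
  obtain ⟨ω₀⟩ := hΩ
  have hπlb : ∀ x, ε ≤ π x := fun x => (hπbd x).1
  have h1πlb : ∀ x, ε ≤ 1 - π x := fun x => by have := (hπbd x).2; linarith
  have hπpos : ∀ x, 0 < π x := fun x => lt_of_lt_of_le hε0 (hπlb x)
  have h1πpos : ∀ x, 0 < 1 - π x := fun x => lt_of_lt_of_le hε0 (h1πlb x)
  have hπne : ∀ x, π x ≠ 0 := fun x => (hπpos x).ne'
  have h1πne : ∀ x, (1 : ℝ) - π x ≠ 0 := fun x => (h1πpos x).ne'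
  -- integrability of bounded measurable functions
  have hint : ∀ (f : Ω → ℝ), Measurable f → ∀ C : ℝ, (∀ ω, |f ω| ≤ C) → Integrable f P := by
    intro f hf C hCf
    exact (integrable_const C).mono' hf.aestronglyMeasurable
      (Filter.Eventually.of_forall fun ω => by simpa using hCf ω)
  have hZabs : ∀ ω, |Z ω| ≤ 1 := fun ω => by rcases hZbin ω with h | h <;> simp [h]
  -- measurability of H
  have hHmeas' : Measurable fun q : ℝ × E => (q.1 - π q.2) / (π q.2 * (1 - π q.2)) := by
    apply Measurable.div
    · exact measurable_fst.sub (hπ.comp measurable_snd)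
    · exact (hπ.comp measurable_snd).mul (measurable_const.sub (hπ.comp measurable_snd))
  have hHeq : H = fun ω => (fun q : ℝ × E => (q.1 - π q.2) / (π q.2 * (1 - π q.2))) (Z ω, X ω) :=
    funext fun ω => hH ω
  have hHmeas : Measurable H := by rw [hHeq]; exact hHmeas'.comp (hZ.prodMk hX)
  -- bound on H
  have hHbd : ∀ ω, |H ω| ≤ 1 / (ε * ε) := by
    intro ω
    rw [hH ω, abs_div]
    have hden : ε * ε ≤ |π (X ω) * (1 - π (X ω))| := by
      rw [abs_of_pos (mul_pos (hπpos _) (h1πpos _))]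
      exact mul_le_mul (hπlb _) (h1πlb _) hε0.le (hπpos _).le
    have hnum : |Z ω - π (X ω)| ≤ 1 := by
      have h1 := hπlb (X ω); have h2 := (hπbd (X ω)).2
      rcases hZbin ω with h | h <;> rw [h, abs_le] <;> constructor <;> linarith
    exact div_le_div₀ zero_le_one hnum (mul_pos hε0 hε0) hden
  -- Lemma A : ∫ Z φ(X) = ∫ π(X) φ(X) for bounded measurable φ
  have hA : ∀ (φ : E → ℝ), Measurable φ → ∀ C : ℝ, (∀ x, |φ x| ≤ C) →
      ∫ ω, Z ω * φ (X ω) ∂P = ∫ ω, π (X ω) * φ (X ω) ∂P := by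
    intro φ hφ C hCf
    have hle : MeasurableSpace.comap X mE ≤ _ := hX.comap_le
    have hZint : Integrable Z P := hint Z hZ 1 hZabs
    have hφm : StronglyMeasurable[MeasurableSpace.comap X mE] (fun ω => φ (X ω)) :=
      (hφ.comp (Measurable.of_comap_le le_rfl)).stronglyMeasurable
    have h1 := condExp_stronglyMeasurable_mul_of_bound hle hφm hZint C
      (Filter.Eventually.of_forall fun ω => by simpa using hCf (X ω))
    have h2 : (fun ω => φ (X ω)) * P[Z | MeasurableSpace.comap X mE]
        =ᵐ[P] fun ω => π (X ω) * φ (X ω) :=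
      hπver.mono fun ω hω => by simp only [Pi.mul_apply, hω]; ring
    calc ∫ ω, Z ω * φ (X ω) ∂P
        = ∫ ω, ((fun ω => φ (X ω)) * Z) ω ∂P := by
          apply integral_congr_ae; filter_upwards with ω; simp [mul_comm]
      _ = ∫ ω, (P[(fun ω => φ (X ω)) * Z | MeasurableSpace.comap X mE]) ω ∂P :=
          (integral_condExp hle).symm
      _ = ∫ ω, π (X ω) * φ (X ω) ∂P := integral_congr_ae (h1.trans h2)
  -- Lemma B : tower property over σ(Z,X)
  have hB : ∫ ω, H ω * (if Y ω ≤ y then (1 : ℝ) else 0) ∂P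
      = ∫ ω, H ω * m (Z ω, X ω) ∂P := by
    have hle : MeasurableSpace.comap (fun ω => (Z ω, X ω))
        (inferInstance : MeasurableSpace (ℝ × E)) ≤ _ := (hZ.prodMk hX).comap_le
    have hIint : Integrable (fun ω => if Y ω ≤ y then (1 : ℝ) else 0) P := by
      refine hint _ (Measurable.ite (measurableSet_le hYm measurable_const)
        measurable_const measurable_const) 1 ?_
      intro ω; split <;> simp
    have hHm : StronglyMeasurable[MeasurableSpace.comap (fun ω => (Z ω, X ω))
        (inferInstance : MeasurableSpace (ℝ × E))] H := by
      rw [hHeq]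
      exact (hHmeas'.comp (Measurable.of_comap_le le_rfl)).stronglyMeasurable
    have h1 := condExp_stronglyMeasurable_mul_of_bound hle hHm hIint (1 / (ε * ε))
      (Filter.Eventually.of_forall fun ω => by simpa using hHbd ω)
    have h2 : H * P[(fun ω => if Y ω ≤ y then (1 : ℝ) else 0) |
        MeasurableSpace.comap (fun ω => (Z ω, X ω)) inferInstance]
        =ᵐ[P] fun ω => H ω * m (Z ω, X ω) :=
      hmver.mono fun ω hω => by simp [Pi.mul_apply, hω]
    calc ∫ ω, H ω * (if Y ω ≤ y then (1 : ℝ) else 0) ∂P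
        = ∫ ω, (H * fun ω => if Y ω ≤ y then (1 : ℝ) else 0) ω ∂P := rfl
      _ = ∫ ω, (P[H * fun ω => if Y ω ≤ y then (1 : ℝ) else 0 |
            MeasurableSpace.comap (fun ω => (Z ω, X ω)) inferInstance]) ω ∂P :=
          (integral_condExp hle).symm
      _ = ∫ ω, H ω * m (Z ω, X ω) ∂P := integral_congr_ae (h1.trans h2)
  -- Lemma C : ∫ H u(Z,X) = ∫ (u(1,X) - u(0,X)) for bounded measurable u
  have hKey : ∀ (u : ℝ × E → ℝ), Measurable u → ∀ C : ℝ, (∀ q, |u q| ≤ C) →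
      ∫ ω, H ω * u (Z ω, X ω) ∂P = ∫ ω, (u (1, X ω) - u (0, X ω)) ∂P := by
    intro u hu C hCu
    have hCnn : 0 ≤ C := le_trans (abs_nonneg _) (hCu (1, X ω₀))
    have hpt : ∀ ω, H ω * u (Z ω, X ω)
        = Z ω * (u (1, X ω) / π (X ω)) - (1 - Z ω) * (u (0, X ω) / (1 - π (X ω))) := by
      intro ω
      have h1 := hπne (X ω); have h2 := h1πne (X ω)
      rcases hZbin ω with h | h <;> rw [hH ω, h] <;> field_simp <;> ring
    have hφ1 : Measurable fun x : E => u (1, x) / π x :=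
      (hu.comp measurable_prodMk_left).div hπ
    have hφ0 : Measurable fun x : E => u (0, x) / (1 - π x) :=
      (hu.comp measurable_prodMk_left).div (measurable_const.sub hπ)
    have hbd1 : ∀ x, |u (1, x) / π x| ≤ C / ε := by
      intro x; rw [abs_div]
      exact div_le_div₀ hCnn (hCu _) hε0 (by rw [abs_of_pos (hπpos x)]; exact hπlb x)
    have hbd0 : ∀ x, |u (0, x) / (1 - π x)| ≤ C / ε := by
      intro x; rw [abs_div]
      exact div_le_div₀ hCnn (hCu _) hε0 (by rw [abs_of_pos (h1πpos x)]; exact h1πlb x)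
    have hi1 : Integrable (fun ω => Z ω * (u (1, X ω) / π (X ω))) P := by
      refine hint _ (hZ.mul (hφ1.comp hX)) (C / ε) fun ω => ?_
      rw [abs_mul]
      calc |Z ω| * |u (1, X ω) / π (X ω)| ≤ 1 * (C / ε) :=
            mul_le_mul (hZabs ω) (hbd1 _) (abs_nonneg _) zero_le_one
        _ = C / ε := one_mul _
    have hi0 : Integrable (fun ω => (1 - Z ω) * (u (0, X ω) / (1 - π (X ω)))) P := by
      refine hint _ ((measurable_const.sub hZ).mul (hφ0.comp hX)) (2 * (C / ε)) fun ω => ?_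
      rw [abs_mul]
      have : |1 - Z ω| ≤ 2 := by rcases hZbin ω with h | h <;> simp [h]
      calc |1 - Z ω| * |u (0, X ω) / (1 - π (X ω))| ≤ 2 * (C / ε) :=
            mul_le_mul this (hbd0 _) (abs_nonneg _) (by norm_num)
        _ = 2 * (C / ε) := rfl
    have hi0' : Integrable (fun ω => u (0, X ω) / (1 - π (X ω))) P :=
      hint _ (hφ0.comp hX) (C / ε) fun ω => hbd0 _
    have hiZ0 : Integrable (fun ω => Z ω * (u (0, X ω) / (1 - π (X ω)))) P := by
      refine hint _ (hZ.mul (hφ0.comp hX)) (C / ε) fun ω => ?_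
      rw [abs_mul]
      calc |Z ω| * |u (0, X ω) / (1 - π (X ω))| ≤ 1 * (C / ε) :=
            mul_le_mul (hZabs ω) (hbd0 _) (abs_nonneg _) zero_le_one
        _ = C / ε := one_mul _
    have e1 : ∫ ω, Z ω * (u (1, X ω) / π (X ω)) ∂P = ∫ ω, u (1, X ω) ∂P := by
      rw [hA _ hφ1 (C / ε) hbd1]
      apply integral_congr_ae; filter_upwards with ω
      rw [mul_div_cancel₀ _ (hπne (X ω))]
    have e0 : ∫ ω, (1 - Z ω) * (u (0, X ω) / (1 - π (X ω))) ∂P = ∫ ω, u (0, X ω) ∂P := by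
      have split : ∫ ω, (1 - Z ω) * (u (0, X ω) / (1 - π (X ω))) ∂P
          = ∫ ω, u (0, X ω) / (1 - π (X ω)) ∂P
            - ∫ ω, Z ω * (u (0, X ω) / (1 - π (X ω))) ∂P := by
        rw [← integral_sub hi0' hiZ0]
        apply integral_congr_ae; filter_upwards with ω; ring
      rw [split, hA _ hφ0 (C / ε) hbd0]
      rw [← integral_sub hi0' (by
        refine hint _ (hπ.comp hX |>.mul (hφ0.comp hX)) (C / ε) fun ω => ?_
        rw [abs_mul]
        have hπ1 : |π (X ω)| ≤ 1 := by
          rw [abs_of_pos (hπpos _)]; have := (hπbd (X ω)).2; linarith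
        calc |π (X ω)| * |u (0, X ω) / (1 - π (X ω))| ≤ 1 * (C / ε) :=
              mul_le_mul hπ1 (hbd0 _) (abs_nonneg _) zero_le_one
          _ = C / ε := one_mul _)]
      apply integral_congr_ae; filter_upwards with ω
      have h2 := h1πne (X ω)
      field_simp
    calc ∫ ω, H ω * u (Z ω, X ω) ∂P
        = ∫ ω, (Z ω * (u (1, X ω) / π (X ω))
            - (1 - Z ω) * (u (0, X ω) / (1 - π (X ω)))) ∂P := by
          apply integral_congr_ae; filter_upwards with ω; exact hpt ω
      _ = ∫ ω, Z ω * (u (1, X ω) / π (X ω)) ∂P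
            - ∫ ω, (1 - Z ω) * (u (0, X ω) / (1 - π (X ω))) ∂P := integral_sub hi1 hi0
      _ = ∫ ω, u (1, X ω) ∂P - ∫ ω, u (0, X ω) ∂P := by rw [e1, e0]
      _ = ∫ ω, (u (1, X ω) - u (0, X ω)) ∂P := by
          have h1 : Integrable (fun ω => u (1, X ω)) P :=
            hint (fun ω => u (1, X ω)) (hu.comp (measurable_const.prodMk hX)) C fun ω => hCu _
          have h0 : Integrable (fun ω => u (0, X ω)) P :=
            hint (fun ω => u (0, X ω)) (hu.comp (measurable_const.prodMk hX)) C fun ω => hCu _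
          exact (integral_sub h1 h0).symm
  -- Putting it together
  have hCmtnn : 0 ≤ Cmt := le_trans (abs_nonneg _) (hmtbd (1, X ω₀))
  have hiHI : Integrable (fun ω => H ω * (if Y ω ≤ y then (1 : ℝ) else 0)) P := by
    refine hint _ (hHmeas.mul (Measurable.ite (measurableSet_le hYm measurable_const)
      measurable_const measurable_const)) (1 / (ε * ε)) fun ω => ?_
    rw [abs_mul]
    have : |if Y ω ≤ y then (1 : ℝ) else 0| ≤ 1 := by split <;> simp
    calc |H ω| * |if Y ω ≤ y then (1 : ℝ) else 0| ≤ (1 / (ε * ε)) * 1 :=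
          mul_le_mul (hHbd ω) this (abs_nonneg _) (by positivity)
      _ = 1 / (ε * ε) := mul_one _
  have hiHmt : Integrable (fun ω => H ω * mt (Z ω, X ω)) P := by
    refine hint _ (hHmeas.mul (hmt.comp (hZ.prodMk hX))) (1 / (ε * ε) * Cmt) fun ω => ?_
    rw [abs_mul]
    exact mul_le_mul (hHbd ω) (hmtbd _) (abs_nonneg _) (by positivity)
  have hiD : Integrable (fun ω => mt (1, X ω) - mt (0, X ω)) P :=
    (hint _ (hmt.comp (measurable_const.prodMk hX)) Cmt fun ω => hmtbd _).sub
      (hint _ (hmt.comp (measurable_const.prodMk hX)) Cmt fun ω => hmtbd _)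
  calc ∫ ω, (H ω * ((if Y ω ≤ y then (1 : ℝ) else 0) - mt (Z ω, X ω))
          + (mt (1, X ω) - mt (0, X ω))) ∂P
      = ∫ ω, (H ω * (if Y ω ≤ y then (1 : ℝ) else 0) - H ω * mt (Z ω, X ω)
          + (mt (1, X ω) - mt (0, X ω))) ∂P := by
        apply integral_congr_ae; filter_upwards with ω; ring
    _ = (∫ ω, H ω * (if Y ω ≤ y then (1 : ℝ) else 0) ∂P
          - ∫ ω, H ω * mt (Z ω, X ω) ∂P) + ∫ ω, (mt (1, X ω) - mt (0, X ω)) ∂P := by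
        have hs : Integrable (fun ω => H ω * (if Y ω ≤ y then (1 : ℝ) else 0)
            - H ω * mt (Z ω, X ω)) P := hiHI.sub hiHmt
        rw [integral_add hs hiD, integral_sub hiHI hiHmt]
    _ = ∫ ω, (m (1, X ω) - m (0, X ω)) ∂P := by
        rw [hB, hKey m hm Cm hmbd, hKey mt hmt Cmt hmtbd]; ring
end

section
/- Let Y : Ω → ℝ be measurable (observed outcome) and fix y ∈ ℝ. Let m : ℝ × E → ℝ be bounded measurable such that m ∘ (Z, X) is a version of the conditional expectation E[1{Y ≤ y} | σ(Z, X)]. Then the augmented score is robust to arbitrary misspecification of the instrument propensity when the outcome regression m is correct: for every measurable π̃ : E → ℝ with ε ≤ π̃(x) ≤ 1 − ε for all x ∈ E (not required to be a version of E[Z | σ(X)]), setting H̃ := (Z − π̃(X)) / (π̃(X)·(1 − π̃(X))), one has E[H̃·(1{Y ≤ y} − m(Z, X)) + (m(1, X) − m(0, X))] = E[m(1, X) − m(0, X)]. -/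
open MeasureTheory ProbabilityTheory

lemma aux_mul_integral_zero {Ω : Type*} {G mΩ : MeasurableSpace Ω} (hle : G ≤ mΩ)
    (P : @Measure Ω mΩ) [IsProbabilityMeasure P] {f g : Ω → ℝ}
    (hf : StronglyMeasurable[G] f) (hfg : Integrable (f * g) P) (hg : Integrable g P)
    (hcond : P[g | G] =ᵐ[P] 0) : ∫ ω, f ω * g ω ∂P = 0 := by
  have hpull : P[f * g | G] =ᵐ[P] f * P[g | G] :=
    condExp_mul_of_stronglyMeasurable_left hf hfg hg
  have h1 : ∫ ω, f ω * g ω ∂P = ∫ ω, (P[f * g | G]) ω ∂P :=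
    (integral_condExp hle (f := f * g)).symm
  rw [h1]
  have hz : P[f * g | G] =ᵐ[P] 0 := by
    filter_upwards [hpull, hcond] with ω e1 e2
    simp [e1, Pi.mul_apply, e2]
  rw [integral_congr_ae hz]
  simp

/-- The augmented score is robust to arbitrary misspecification of the instrument propensity
when the outcome regression `m` is correct. -/
theorem augmented_score_robust_to_propensity
    {Ω E : Type*} [MeasurableSpace Ω] [mE : MeasurableSpace E]
    (P : Measure Ω) [IsProbabilityMeasure P]
    (X : Ω → E) (hX : Measurable X)
    (Z : Ω → ℝ) (hZ : Measurable Z) (hZbin : ∀ ω, Z ω = 0 ∨ Z ω = 1)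
    (ε : ℝ) (hε : 0 < ε ∧ ε < 1 / 2)
    (π : E → ℝ) (hπ : Measurable π) (hπbd : ∀ x, ε ≤ π x ∧ π x ≤ 1 - ε)
    (hπver : P[Z | MeasurableSpace.comap X mE] =ᵐ[P] fun ω => π (X ω))
    (H : Ω → ℝ) (hH : ∀ ω, H ω = (Z ω - π (X ω)) / (π (X ω) * (1 - π (X ω))))
    (Y : Ω → ℝ) (hYm : Measurable Y) (y : ℝ)
    (m : ℝ × E → ℝ) (hm : Measurable m) (Cm : ℝ) (hmbd : ∀ q, |m q| ≤ Cm)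
    (hmver : P[(fun ω => if Y ω ≤ y then (1 : ℝ) else 0) |
        MeasurableSpace.comap (fun ω => (Z ω, X ω)) inferInstance]
      =ᵐ[P] fun ω => m (Z ω, X ω)) :
    ∀ (πt : E → ℝ), Measurable πt → (∀ x, ε ≤ πt x ∧ πt x ≤ 1 - ε) →
      ∫ ω, ((Z ω - πt (X ω)) / (πt (X ω) * (1 - πt (X ω)))
            * ((if Y ω ≤ y then (1 : ℝ) else 0) - m (Z ω, X ω))
          + (m (1, X ω) - m (0, X ω))) ∂P
        = ∫ ω, (m (1, X ω) - m (0, X ω)) ∂P := by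
  intro πt hπt hπtbd
  obtain ⟨hε0, hε2⟩ := hε
  have hZXmeas : Measurable (fun ω => (Z ω, X ω)) := hZ.prodMk hX
  have hle : MeasurableSpace.comap (fun ω => (Z ω, X ω)) inferInstance ≤ ‹MeasurableSpace Ω› :=
    measurable_iff_comap_le.mp hZXmeas
  have hself : Measurable[MeasurableSpace.comap (fun ω => (Z ω, X ω)) inferInstance]
      (fun ω => (Z ω, X ω)) := measurable_iff_comap_le.mpr le_rfl
  set f : Ω → ℝ := fun ω =>
    (Z ω - πt (X ω)) / (πt (X ω) * (1 - πt (X ω))) with hf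
  set g : Ω → ℝ := fun ω =>
    (if Y ω ≤ y then (1 : ℝ) else 0) - m (Z ω, X ω) with hg
  have hφ : Measurable (fun p : ℝ × E => (p.1 - πt p.2) / (πt p.2 * (1 - πt p.2))) :=
    (measurable_fst.sub (hπt.comp measurable_snd)).div
      ((hπt.comp measurable_snd).mul (measurable_const.sub (hπt.comp measurable_snd)))
  have hfG : StronglyMeasurable[MeasurableSpace.comap (fun ω => (Z ω, X ω)) inferInstance] f :=
    (hφ.comp hself).stronglyMeasurable
  have hfmeas : Measurable f := hφ.comp hZXmeas
  have hfbd : ∀ ω, |f ω| ≤ 1 / (ε * ε) := by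
    intro ω
    have h1 : ε ≤ πt (X ω) := (hπtbd _).1
    have h2 : πt (X ω) ≤ 1 - ε := (hπtbd _).2
    have hnum : |Z ω - πt (X ω)| ≤ 1 := by
      rcases hZbin ω with h | h <;> rw [h, abs_le] <;> constructor <;> nlinarith
    have hden : ε * ε ≤ πt (X ω) * (1 - πt (X ω)) := by nlinarith
    have hden0 : (0:ℝ) < πt (X ω) * (1 - πt (X ω)) := by nlinarith
    rw [hf]
    simp only
    rw [abs_div, abs_of_pos hden0]
    exact div_le_div₀ zero_le_one hnum (by positivity) hden
  have hindmeas : Measurable (fun ω => (if Y ω ≤ y then (1:ℝ) else 0)) :=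
    Measurable.ite (hYm measurableSet_Iic) measurable_const measurable_const
  have hgmeas : Measurable g := hindmeas.sub (hm.comp hZXmeas)
  have hgbd : ∀ ω, |g ω| ≤ 1 + Cm := by
    intro ω
    have h2 := hmbd (Z ω, X ω)
    have h1 : |(if Y ω ≤ y then (1:ℝ) else 0)| ≤ 1 := by split <;> simp
    calc |g ω| ≤ |(if Y ω ≤ y then (1:ℝ) else 0)| + |m (Z ω, X ω)| := abs_sub _ _
      _ ≤ 1 + Cm := add_le_add h1 h2
  have int_of_bd : ∀ (u : Ω → ℝ) (C : ℝ), Measurable u → (∀ ω, |u ω| ≤ C) →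
      Integrable u P := by
    intro u C hu hbd
    exact ⟨hu.aestronglyMeasurable,
      HasFiniteIntegral.of_bounded (C := C) (Filter.Eventually.of_forall fun ω => by
        simpa [Real.norm_eq_abs] using hbd ω)⟩
  have hgint : Integrable g P := int_of_bd g (1 + Cm) hgmeas hgbd
  have hfgint : Integrable (f * g) P := by
    refine int_of_bd (f * g) ((1 / (ε * ε)) * (1 + Cm)) (hfmeas.mul hgmeas) fun ω => ?_
    calc |(f * g) ω| = |f ω| * |g ω| := abs_mul _ _
      _ ≤ (1 / (ε * ε)) * (1 + Cm) :=
          mul_le_mul (hfbd ω) (hgbd ω) (abs_nonneg _) (by positivity)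
  have hindint : Integrable (fun ω => (if Y ω ≤ y then (1:ℝ) else 0)) P :=
    int_of_bd _ 1 hindmeas (fun ω => by split <;> simp)
  have hmint : Integrable (fun ω => m (Z ω, X ω)) P :=
    int_of_bd _ Cm (hm.comp hZXmeas) (fun ω => hmbd _)
  have hmG : StronglyMeasurable[MeasurableSpace.comap (fun ω => (Z ω, X ω)) inferInstance]
      (fun ω => m (Z ω, X ω)) := (hm.comp hself).stronglyMeasurable
  have hcondg : P[g | MeasurableSpace.comap (fun ω => (Z ω, X ω)) inferInstance] =ᵐ[P] 0 := by
    have h1 := condExp_sub (μ := P)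
      (m := MeasurableSpace.comap (fun ω => (Z ω, X ω)) inferInstance) hindint hmint
    have h2 : P[(fun ω => m (Z ω, X ω)) |
        MeasurableSpace.comap (fun ω => (Z ω, X ω)) inferInstance]
        =ᵐ[P] (fun ω => m (Z ω, X ω)) :=
      Filter.EventuallyEq.of_eq (condExp_of_stronglyMeasurable hle hmG hmint)
    filter_upwards [h1, h2, hmver] with ω e1 e2 e3
    have : (P[(fun ω => if Y ω ≤ y then (1:ℝ) else 0) - (fun ω => m (Z ω, X ω)) |
        MeasurableSpace.comap (fun ω => (Z ω, X ω)) inferInstance]) ω = 0 := by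
      rw [e1]; simp only [Pi.sub_apply]; rw [e2, e3]; ring
    exact this
  have hzero : ∫ ω, f ω * g ω ∂P = 0 :=
    aux_mul_integral_zero hle P hfG hfgint hgint hcondg
  have hhint : Integrable (fun ω => m (1, X ω) - m (0, X ω)) P := by
    refine int_of_bd _ (Cm + Cm)
      ((hm.comp (measurable_const.prodMk hX)).sub (hm.comp (measurable_const.prodMk hX)))
      fun ω => ?_
    calc |m (1, X ω) - m (0, X ω)| ≤ |m (1, X ω)| + |m (0, X ω)| := abs_sub _ _
      _ ≤ Cm + Cm := add_le_add (hmbd _) (hmbd _)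
  have hadd := integral_add hfgint hhint
  simp only [Pi.add_apply, Pi.mul_apply] at hadd
  rw [hadd] at *
  rw [hzero, zero_add]
end

section
/- For every y ∈ ℝ, the propensity-weighted distributional moment identifies the complier contrast of potential-outcome subdistributions: E[H·1{Y ≤ y}] = P({Y1 ≤ y} ∩ C) − P({Y0 ≤ y} ∩ C). -/
/-!
Split the event `{Y ≤ y}` according to the instrument: on `{Z = 1}` it is the event that the
outcome under `W1` is at most `y`, on `{Z = 0}` the one under `W0`. Conditionally on `X` the
instrument is independent of both events, so weighting by `1 / π(X)` resp. `1 / (1 - π(X))`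
undoes the selection and `E[H · 1{Y ≤ y}]` is the difference of the unconditional probabilities
of the two events. These agree off the compliers, where `W0 = W1` almost surely, while on the
compliers `W1 = 1` and `W0 = 0`.
-/

open MeasureTheory ProbabilityTheory

section BinaryInstrument

variable {Ω : Type*} {Z : Ω → ℝ}

theorem indicator_preimage_one_of_binary (hZbin : ∀ ω, Z ω = 0 ∨ Z ω = 1) :
    (Z ⁻¹' {1}).indicator (fun _ ↦ (1 : ℝ)) = Z := by
  funext ω
  rcases hZbin ω with h | h <;> simp [h]

theorem indicator_preimage_zero_of_binary (hZbin : ∀ ω, Z ω = 0 ∨ Z ω = 1) :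
    (Z ⁻¹' {0}).indicator (fun _ ↦ (1 : ℝ)) = fun ω ↦ 1 - Z ω := by
  funext ω
  rcases hZbin ω with h | h <;> simp [h]

theorem preimage_eq_union_inter_of_binary (hZbin : ∀ ω, Z ω = 0 ∨ Z ω = 1) {U0 U1 Y : Ω → ℝ}
    (hY : ∀ ω, Y ω = Z ω * U1 ω + (1 - Z ω) * U0 ω) (s : Set ℝ) :
    Y ⁻¹' s = Z ⁻¹' {1} ∩ U1 ⁻¹' s ∪ Z ⁻¹' {0} ∩ U0 ⁻¹' s := by
  ext ω
  rcases hZbin ω with h | h <;> simp [hY ω, h]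

theorem ipw_mul_indicator_eq (hZbin : ∀ ω, Z ω = 0 ∨ Z ω = 1) {p : Ω → ℝ} {T0 T1 : Set Ω}
    (ω : Ω) (hp0 : p ω ≠ 0) (hp1 : 1 - p ω ≠ 0) :
    (Z ω - p ω) / (p ω * (1 - p ω)) *
        (Z ⁻¹' {1} ∩ T1 ∪ Z ⁻¹' {0} ∩ T0).indicator (fun _ ↦ (1 : ℝ)) ω
      = (p ω)⁻¹ * (Z ⁻¹' {1} ∩ T1).indicator (fun _ ↦ (1 : ℝ)) ω
        - (1 - p ω)⁻¹ * (Z ⁻¹' {0} ∩ T0).indicator (fun _ ↦ (1 : ℝ)) ω := by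
  rcases hZbin ω with h | h <;> by_cases h0 : ω ∈ T0 <;> by_cases h1 : ω ∈ T1 <;>
    simp [h, h0, h1] <;> field_simp

end BinaryInstrument

section InverseProbabilityWeighting

variable {Ω : Type*} {m : MeasurableSpace Ω} [mΩ : MeasurableSpace Ω] {P : Measure Ω}
  [IsFiniteMeasure P]

theorem integrable_inv_mul_indicator {q : Ω → ℝ} (hq : AEMeasurable q P) {ε : ℝ} (hε : 0 < ε)
    (hqε : ∀ ω, ε ≤ q ω) {s : Set Ω} (hs : MeasurableSet s) :
    Integrable (fun ω ↦ (q ω)⁻¹ * s.indicator (fun _ ↦ (1 : ℝ)) ω) P := by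
  refine ((integrable_const 1).indicator hs).bdd_mul (c := ε⁻¹) hq.inv.aestronglyMeasurable
    (ae_of_all _ fun ω ↦ ?_)
  rw [norm_inv, Real.norm_of_nonneg (hε.le.trans (hqε ω))]
  exact inv_anti₀ hε (hqε ω)

theorem integral_inv_mul_indicator_inter_eq_measureReal (hm : m ≤ mΩ) {q : Ω → ℝ}
    (hq : StronglyMeasurable[m] q) {ε : ℝ} (hε : 0 < ε) (hqε : ∀ ω, ε ≤ q ω)
    {S T : Set Ω} (hS : MeasurableSet S) (hT : MeasurableSet T) (hSq : P⟦S | m⟧ =ᵐ[P] q)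
    (hindep : P⟦S ∩ T | m⟧ =ᵐ[P] (P⟦S | m⟧) * (P⟦T | m⟧)) :
    ∫ ω, (q ω)⁻¹ * (S ∩ T).indicator (fun _ ↦ (1 : ℝ)) ω ∂P = P.real T := by
  have hST : Integrable ((S ∩ T).indicator fun _ ↦ (1 : ℝ)) P :=
    (integrable_const 1).indicator (hS.inter hT)
  have hpull : P[q⁻¹ * (S ∩ T).indicator fun _ ↦ (1 : ℝ) | m] =ᵐ[P] P⟦T | m⟧ := by
    filter_upwards [condExp_mul_of_stronglyMeasurable_left hq.measurable.inv.stronglyMeasurable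
      (integrable_inv_mul_indicator (hq.mono hm).measurable.aemeasurable hε hqε (hS.inter hT))
      hST, hindep, hSq] with ω hpull hindep hSq
    have hq0 : q ω ≠ 0 := (hε.trans_le (hqε ω)).ne'
    rw [hpull, Pi.mul_apply, Pi.inv_apply, hindep, Pi.mul_apply, hSq, ← mul_assoc,
      inv_mul_cancel₀ hq0, one_mul]
  calc ∫ ω, (q ω)⁻¹ * (S ∩ T).indicator (fun _ ↦ (1 : ℝ)) ω ∂P
      = ∫ ω, P[q⁻¹ * (S ∩ T).indicator fun _ ↦ (1 : ℝ) | m] ω ∂P := (integral_condExp hm).symm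
    _ = ∫ ω, (P⟦T | m⟧) ω ∂P := integral_congr_ae hpull
    _ = P.real T := (integral_condExp hm).trans (integral_indicator_one hT)

variable {Z p : Ω → ℝ}

theorem condExp_indicator_preimage_zero_of_binary (hm : m ≤ mΩ) (hZ : Measurable Z)
    (hZbin : ∀ ω, Z ω = 0 ∨ Z ω = 1) (hZp : P[Z | m] =ᵐ[P] p) :
    P⟦Z ⁻¹' {0} | m⟧ =ᵐ[P] fun ω ↦ 1 - p ω := by
  have hZint : Integrable Z P := by
    rw [← indicator_preimage_one_of_binary hZbin]
    exact (integrable_const 1).indicator (hZ (measurableSet_singleton 1))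
  rw [indicator_preimage_zero_of_binary hZbin]
  filter_upwards [condExp_sub (integrable_const 1) hZint m, hZp] with ω hsub hZp
  rw [show (fun ω ↦ 1 - Z ω) = (fun _ ↦ (1 : ℝ)) - Z from rfl, hsub, Pi.sub_apply,
    condExp_const hm, hZp]

theorem integral_ipw_mul_indicator_eq_measureReal_sub [StandardBorelSpace Ω] {β : Type*}
    [mβ : MeasurableSpace β] (hm : m ≤ mΩ) {V : Ω → β} (hZ : Measurable Z) (hV : Measurable V)
    (hci : CondIndepFun m hm Z V P) (hZbin : ∀ ω, Z ω = 0 ∨ Z ω = 1)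
    (hp : StronglyMeasurable[m] p) {ε : ℝ} (hε : 0 < ε) (hpε : ∀ ω, ε ≤ p ω ∧ p ω ≤ 1 - ε)
    (hZp : P[Z | m] =ᵐ[P] p) {T0 T1 : Set Ω} (hT0 : MeasurableSet[mβ.comap V] T0)
    (hT1 : MeasurableSet[mβ.comap V] T1) :
    ∫ ω, (Z ω - p ω) / (p ω * (1 - p ω)) *
        (Z ⁻¹' {1} ∩ T1 ∪ Z ⁻¹' {0} ∩ T0).indicator (fun _ ↦ (1 : ℝ)) ω ∂P
      = P.real T1 - P.real T0 := by
  have hindep := (condIndepFun_iff m hm Z V hZ hV P).mp hci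
  have hS1 : MeasurableSet[MeasurableSpace.comap Z inferInstance] (Z ⁻¹' {1}) :=
    ⟨_, measurableSet_singleton 1, rfl⟩
  have hS0 : MeasurableSet[MeasurableSpace.comap Z inferInstance] (Z ⁻¹' {0}) :=
    ⟨_, measurableSet_singleton 0, rfl⟩
  have hq : StronglyMeasurable[m] (fun ω ↦ 1 - p ω) :=
    (measurable_const.sub hp.measurable).stronglyMeasurable
  have hpε' : ∀ ω, ε ≤ p ω := fun ω ↦ (hpε ω).1
  have hqε : ∀ ω, ε ≤ 1 - p ω := fun ω ↦ by linarith [hpε ω]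
  have hint1 := integrable_inv_mul_indicator (P := P) (hp.mono hm).measurable.aemeasurable hε hpε'
    ((hZ.comap_le _ hS1).inter (hV.comap_le _ hT1))
  have hint0 := integrable_inv_mul_indicator (P := P) (hq.mono hm).measurable.aemeasurable hε hqε
    ((hZ.comap_le _ hS0).inter (hV.comap_le _ hT0))
  have hT1eq := integral_inv_mul_indicator_inter_eq_measureReal (P := P) hm hp hε hpε'
    (hZ.comap_le _ hS1) (hV.comap_le _ hT1)
    (by rw [indicator_preimage_one_of_binary hZbin]; exact hZp) (hindep _ _ hS1 hT1)
  have hT0eq := integral_inv_mul_indicator_inter_eq_measureReal (P := P) hm hq hε hqε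
    (hZ.comap_le _ hS0) (hV.comap_le _ hT0)
    (condExp_indicator_preimage_zero_of_binary hm hZ hZbin hZp) (hindep _ _ hS0 hT0)
  rw [integral_congr_ae (ae_of_all _ fun ω ↦ ipw_mul_indicator_eq hZbin ω
      (hε.trans_le (hpε' ω)).ne' (hε.trans_le (hqε ω)).ne'),
    integral_sub hint1 hint0, hT1eq, hT0eq]

end InverseProbabilityWeighting

section Compliers

variable {Ω : Type*} [MeasurableSpace Ω] {μ : Measure Ω} [IsFiniteMeasure μ]

theorem measureReal_sub_eq_of_diff_ae_eq {A B C : Set Ω} (hC : MeasurableSet C)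
    (h : (A \ C : Set Ω) =ᵐ[μ] (B \ C : Set Ω)) :
    μ.real A - μ.real B = μ.real (A ∩ C) - μ.real (B ∩ C) := by
  rw [← measureReal_inter_add_sdiff (s := A) hC, ← measureReal_inter_add_sdiff (s := B) hC,
    measureReal_congr h]
  ring

theorem eq_zero_and_eq_one_of_lt_of_binary {a b : ℝ} (ha : a = 0 ∨ a = 1) (hb : b = 0 ∨ b = 1)
    (hab : a < b) : a = 0 ∧ b = 1 := by
  rcases ha with rfl | rfl <;> rcases hb with rfl | rfl <;> norm_num at *

theorem measureReal_sub_eq_complier {W0 W1 Y0 Y1 : Ω → ℝ} (hW0 : Measurable W0)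
    (hW1 : Measurable W1) (hW0bin : ∀ ω, W0 ω = 0 ∨ W0 ω = 1)
    (hW1bin : ∀ ω, W1 ω = 0 ∨ W1 ω = 1) (hmono : ∀ᵐ ω ∂μ, W0 ω ≤ W1 ω) (y : ℝ) :
    μ.real {ω | W1 ω * Y1 ω + (1 - W1 ω) * Y0 ω ≤ y}
        - μ.real {ω | W0 ω * Y1 ω + (1 - W0 ω) * Y0 ω ≤ y}
      = μ.real ({ω | Y1 ω ≤ y} ∩ {ω | W0 ω < W1 ω})
        - μ.real ({ω | Y0 ω ≤ y} ∩ {ω | W0 ω < W1 ω}) := by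
  rw [measureReal_sub_eq_of_diff_ae_eq (measurableSet_lt hW0 hW1)]
  · congr 2 <;> ext ω <;> refine and_congr_left fun hC ↦ ?_ <;>
      obtain ⟨h0, h1⟩ := eq_zero_and_eq_one_of_lt_of_binary (hW0bin ω) (hW1bin ω) hC <;>
      simp [h0, h1]
  · refine Filter.eventuallyEq_set.mpr ?_
    filter_upwards [hmono] with ω hω
    refine and_congr_left fun hC ↦ ?_
    simp only [Set.mem_ofPred_eq, le_antisymm hω (not_lt.mp hC)]

end Compliers

/-- The propensity-weighted distributional moment identifies the complier contrast of
potential-outcome subdistributions: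
`E[H·1{Y ≤ y}] = P({Y1 ≤ y} ∩ C) − P({Y0 ≤ y} ∩ C)`. -/
theorem weighted_distributional_moment_identifies_complier_contrast
    {Ω : Type*} [MeasurableSpace Ω] [StandardBorelSpace Ω] {d : ℕ}
    (P : Measure Ω) [IsProbabilityMeasure P]
    (X : Ω → (Fin d → ℝ)) (hX : Measurable X)
    (Z W0 W1 Y0 Y1 : Ω → ℝ)
    (hZ : Measurable Z) (hW0 : Measurable W0) (hW1 : Measurable W1)
    (hY0 : Measurable Y0) (hY1 : Measurable Y1)
    (hZbin : ∀ ω, Z ω = 0 ∨ Z ω = 1)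
    (hW0bin : ∀ ω, W0 ω = 0 ∨ W0 ω = 1)
    (hW1bin : ∀ ω, W1 ω = 0 ∨ W1 ω = 1)
    (W Y : Ω → ℝ)
    (hWdef : ∀ ω, W ω = Z ω * W1 ω + (1 - Z ω) * W0 ω)
    (hYdef : ∀ ω, Y ω = W ω * Y1 ω + (1 - W ω) * Y0 ω)
    (hcondindep : CondIndepFun (MeasurableSpace.comap X inferInstance) hX.comap_le
      Z (fun ω => (Y0 ω, Y1 ω, W0 ω, W1 ω)) P)
    (hmono : ∀ᵐ ω ∂P, W0 ω ≤ W1 ω)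
    (ε : ℝ) (hε : 0 < ε ∧ ε < 1 / 2)
    (π : (Fin d → ℝ) → ℝ) (hπ : Measurable π) (hπbd : ∀ x, ε ≤ π x ∧ π x ≤ 1 - ε)
    (hπver : P[Z | MeasurableSpace.comap X inferInstance] =ᵐ[P] fun ω => π (X ω))
    (H : Ω → ℝ) (hH : ∀ ω, H ω = (Z ω - π (X ω)) / (π (X ω) * (1 - π (X ω)))) :
    ∀ y : ℝ,
      ∫ ω, H ω * (if Y ω ≤ y then (1 : ℝ) else 0) ∂P
        = (P ({ω | Y1 ω ≤ y} ∩ {ω | W0 ω < W1 ω})).toReal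
          - (P ({ω | Y0 ω ≤ y} ∩ {ω | W0 ω < W1 ω})).toReal := by
  intro y
  have hY : ∀ ω, Y ω = Z ω * (W1 ω * Y1 ω + (1 - W1 ω) * Y0 ω)
      + (1 - Z ω) * (W0 ω * Y1 ω + (1 - W0 ω) * Y0 ω) := fun ω ↦ by
    rw [hYdef, hWdef]; ring
  have hp : StronglyMeasurable[MeasurableSpace.comap X inferInstance] fun ω ↦ π (X ω) :=
    (hπ.comp (comap_measurable X)).stronglyMeasurable
  have hV : Measurable fun ω ↦ (Y0 ω, Y1 ω, W0 ω, W1 ω) := by fun_prop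
  calc ∫ ω, H ω * (if Y ω ≤ y then (1 : ℝ) else 0) ∂P
      = ∫ ω, (Z ω - π (X ω)) / (π (X ω) * (1 - π (X ω))) *
          (Y ⁻¹' Set.Iic y).indicator (fun _ ↦ (1 : ℝ)) ω ∂P := by
        refine integral_congr_ae (ae_of_all _ fun ω ↦ ?_)
        by_cases hy : Y ω ≤ y <;> simp [hH, hy]
    _ = P.real {ω | W1 ω * Y1 ω + (1 - W1 ω) * Y0 ω ≤ y}
          - P.real {ω | W0 ω * Y1 ω + (1 - W0 ω) * Y0 ω ≤ y} := by
        rw [preimage_eq_union_inter_of_binary hZbin hY]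
        exact integral_ipw_mul_indicator_eq_measureReal_sub hX.comap_le hZ hV hcondindep hZbin
          hp hε.1 (fun ω ↦ hπbd (X ω)) hπver
          ⟨{q | q.2.2.1 * q.2.1 + (1 - q.2.2.1) * q.1 ≤ y}, measurableSet_le (by fun_prop)
            measurable_const, rfl⟩
          ⟨{q | q.2.2.2 * q.2.1 + (1 - q.2.2.2) * q.1 ≤ y}, measurableSet_le (by fun_prop)
            measurable_const, rfl⟩
    _ = _ := measureReal_sub_eq_complier hW0 hW1 hW0bin hW1bin hmono y
end

section
/- The propensity-weighted first-stage moment identifies the proportion of compliers: E[H·W] = P(C). -/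
open MeasureTheory ProbabilityTheory

lemma aux_weighted_integral {Ω : Type*} (m : MeasurableSpace Ω) [mΩ : MeasurableSpace Ω]
    (hm : m ≤ mΩ)
    (P : Measure Ω) [IsProbabilityMeasure P]
    {A B : Set Ω} (hA : MeasurableSet A) (hB : MeasurableSet B)
    {g : Ω → ℝ} (hg : StronglyMeasurable[m] g) {c : ℝ} (hgbd : ∀ ω, |g ω| ≤ c)
    (hprod : (P⟦A ∩ B | m⟧) =ᵐ[P] fun ω => (P⟦A | m⟧) ω * (P⟦B | m⟧) ω)
    (hgA : ∀ᵐ ω ∂P, g ω * (P⟦A | m⟧) ω = 1) :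
    ∫ ω, g ω * (A.indicator (fun _ => (1:ℝ)) ω * B.indicator (fun _ => (1:ℝ)) ω) ∂P
      = (P B).toReal := by
  have hAB : MeasurableSet (A ∩ B) := hA.inter hB
  have hind : ∀ ω, A.indicator (fun _ => (1:ℝ)) ω * B.indicator (fun _ => (1:ℝ)) ω
      = (A ∩ B).indicator (fun _ => (1:ℝ)) ω := by
    intro ω
    by_cases hωA : ω ∈ A <;> by_cases hωB : ω ∈ B <;>
      simp [Set.indicator_apply, hωA, hωB, Set.mem_inter_iff]
  have hindint : Integrable ((A ∩ B).indicator (fun _ => (1:ℝ))) P :=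
    (integrable_const (1:ℝ)).indicator hAB
  have hfgint : Integrable (g * (A ∩ B).indicator (fun _ => (1:ℝ))) P := by
    refine Integrable.mono' (integrable_const c)
      (((hg.mono hm).mul (stronglyMeasurable_const.indicator hAB)).aestronglyMeasurable)
      (Filter.Eventually.of_forall fun ω => ?_)
    by_cases hω : ω ∈ A ∩ B
    · simpa [Set.indicator_of_mem hω, Real.norm_eq_abs, abs_mul] using hgbd ω
    · simp only [Pi.mul_apply, Set.indicator_of_notMem hω, mul_zero, norm_zero]
      exact le_trans (abs_nonneg (g ω)) (hgbd ω)
  calc ∫ ω, g ω * (A.indicator (fun _ => (1:ℝ)) ω * B.indicator (fun _ => (1:ℝ)) ω) ∂P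
      = ∫ ω, (g * (A ∩ B).indicator (fun _ => (1:ℝ))) ω ∂P := by
        refine integral_congr_ae (Filter.Eventually.of_forall fun ω => ?_)
        simp [hind ω]
    _ = ∫ ω, (P[g * (A ∩ B).indicator (fun _ => (1:ℝ)) | m]) ω ∂P :=
        (integral_condExp hm).symm
    _ = ∫ ω, g ω * (P⟦A ∩ B | m⟧) ω ∂P := by
        refine integral_congr_ae ?_
        filter_upwards [condExp_mul_of_stronglyMeasurable_left hg hfgint hindint] with ω hω
        simpa using hω
    _ = ∫ ω, (P⟦B | m⟧) ω ∂P := by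
        refine integral_congr_ae ?_
        filter_upwards [hprod, hgA] with ω h1 h2
        rw [h1, ← mul_assoc, h2, one_mul]
    _ = ∫ ω, B.indicator (fun _ => (1:ℝ)) ω ∂P := integral_condExp hm
    _ = (P B).toReal := integral_indicator_one hB

/-- The propensity-weighted first-stage moment identifies the proportion of compliers:
`E[H·W] = P(C)`. -/
theorem weighted_first_stage_identifies_complier_share
    {Ω : Type*} [MeasurableSpace Ω] [StandardBorelSpace Ω] {d : ℕ}
    (P : Measure Ω) [IsProbabilityMeasure P]
    (X : Ω → (Fin d → ℝ)) (hX : Measurable X)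
    (Z W0 W1 Y0 Y1 : Ω → ℝ)
    (hZ : Measurable Z) (hW0 : Measurable W0) (hW1 : Measurable W1)
    (hY0 : Measurable Y0) (hY1 : Measurable Y1)
    (hZbin : ∀ ω, Z ω = 0 ∨ Z ω = 1)
    (hW0bin : ∀ ω, W0 ω = 0 ∨ W0 ω = 1)
    (hW1bin : ∀ ω, W1 ω = 0 ∨ W1 ω = 1)
    (W Y : Ω → ℝ)
    (hWdef : ∀ ω, W ω = Z ω * W1 ω + (1 - Z ω) * W0 ω)
    (hYdef : ∀ ω, Y ω = W ω * Y1 ω + (1 - W ω) * Y0 ω)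
    (hcondindep : CondIndepFun (MeasurableSpace.comap X inferInstance) hX.comap_le
      Z (fun ω => (Y0 ω, Y1 ω, W0 ω, W1 ω)) P)
    (hmono : ∀ᵐ ω ∂P, W0 ω ≤ W1 ω)
    (ε : ℝ) (hε : 0 < ε ∧ ε < 1 / 2)
    (π : (Fin d → ℝ) → ℝ) (hπ : Measurable π) (hπbd : ∀ x, ε ≤ π x ∧ π x ≤ 1 - ε)
    (hπver : P[Z | MeasurableSpace.comap X inferInstance] =ᵐ[P] fun ω => π (X ω))
    (H : Ω → ℝ) (hH : ∀ ω, H ω = (Z ω - π (X ω)) / (π (X ω) * (1 - π (X ω)))) :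
    ∫ ω, H ω * W ω ∂P = (P {ω | W0 ω < W1 ω}).toReal := by
  have hm := hX.comap_le
  have hXm : Measurable[MeasurableSpace.comap X inferInstance] X := comap_measurable X
  have hπX : Measurable[MeasurableSpace.comap X inferInstance] fun ω => π (X ω) := hπ.comp hXm
  have hεpos : (0:ℝ) < ε := hε.1
  have hπpos : ∀ ω, 0 < π (X ω) := fun ω => lt_of_lt_of_le hεpos (hπbd (X ω)).1
  have h1πpos : ∀ ω, 0 < 1 - π (X ω) := fun ω => by
    have := (hπbd (X ω)).2; linarith
  -- sets
  set A : Set Ω := Z ⁻¹' {1} with hA_def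
  set A' : Set Ω := Z ⁻¹' {0} with hA'_def
  set B : Set Ω := W1 ⁻¹' {1} with hB_def
  set B' : Set Ω := W0 ⁻¹' {1} with hB'_def
  have hA : MeasurableSet A := hZ (measurableSet_singleton 1)
  have hA' : MeasurableSet A' := hZ (measurableSet_singleton 0)
  have hB : MeasurableSet B := hW1 (measurableSet_singleton 1)
  have hB' : MeasurableSet B' := hW0 (measurableSet_singleton 1)
  have hZind : ∀ ω, Z ω = A.indicator (fun _ => (1:ℝ)) ω := by
    intro ω
    rcases hZbin ω with h | h <;>
      simp [Set.indicator_apply, hA_def, Set.mem_preimage, h]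
  have h1Zind : ∀ ω, 1 - Z ω = A'.indicator (fun _ => (1:ℝ)) ω := by
    intro ω
    rcases hZbin ω with h | h <;>
      simp [Set.indicator_apply, hA'_def, Set.mem_preimage, h]
  have hW1ind : ∀ ω, W1 ω = B.indicator (fun _ => (1:ℝ)) ω := by
    intro ω
    rcases hW1bin ω with h | h <;>
      simp [Set.indicator_apply, hB_def, Set.mem_preimage, h]
  have hW0ind : ∀ ω, W0 ω = B'.indicator (fun _ => (1:ℝ)) ω := by
    intro ω
    rcases hW0bin ω with h | h <;>
      simp [Set.indicator_apply, hB'_def, Set.mem_preimage, h]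
  -- component conditional independences
  have hZW1 : CondIndepFun (MeasurableSpace.comap X inferInstance) hm Z W1 P := by
    have := hcondindep.comp measurable_id
      (measurable_snd.comp (measurable_snd.comp measurable_snd))
    exact this
  have hZW0 : CondIndepFun (MeasurableSpace.comap X inferInstance) hm Z W0 P := by
    have := hcondindep.comp measurable_id
      (measurable_fst.comp (measurable_snd.comp measurable_snd))
    exact this
  have hprod1 : (P⟦A ∩ B | MeasurableSpace.comap X inferInstance⟧) =ᵐ[P] fun ω => (P⟦A | MeasurableSpace.comap X inferInstance⟧) ω * (P⟦B | MeasurableSpace.comap X inferInstance⟧) ω :=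
    (condIndepFun_iff_condExp_inter_preimage_eq_mul hZ hW1).mp hZW1 {1} {1}
      (measurableSet_singleton 1) (measurableSet_singleton 1)
  have hprod0 : (P⟦A' ∩ B' | MeasurableSpace.comap X inferInstance⟧) =ᵐ[P] fun ω => (P⟦A' | MeasurableSpace.comap X inferInstance⟧) ω * (P⟦B' | MeasurableSpace.comap X inferInstance⟧) ω :=
    (condIndepFun_iff_condExp_inter_preimage_eq_mul hZ hW0).mp hZW0 {0} {1}
      (measurableSet_singleton 0) (measurableSet_singleton 1)
  -- identify conditional expectations of the indicators
  have hZint : Integrable Z P := by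
    refine Integrable.mono' (integrable_const (1:ℝ)) hZ.aestronglyMeasurable
      (Filter.Eventually.of_forall fun ω => ?_)
    rcases hZbin ω with h | h <;> simp [h]
  have hcondA : (P⟦A | MeasurableSpace.comap X inferInstance⟧) =ᵐ[P] fun ω => π (X ω) := by
    have hfun : Set.indicator A (fun _ => (1:ℝ)) = Z := funext fun ω => (hZind ω).symm
    rw [hfun]
    exact hπver
  have hcondA' : (P⟦A' | MeasurableSpace.comap X inferInstance⟧) =ᵐ[P] fun ω => 1 - π (X ω) := by
    have hfun : Set.indicator A' (fun _ => (1:ℝ)) = (fun _ => (1:ℝ)) - Z :=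
      funext fun ω => (h1Zind ω).symm
    rw [hfun]
    have hsub := condExp_sub (m := MeasurableSpace.comap X inferInstance) (μ := P) (f := fun _ => (1:ℝ)) (g := Z) (integrable_const (1:ℝ)) hZint
    refine hsub.trans ?_
    filter_upwards [hπver] with ω hω
    simp [condExp_const hm (1:ℝ), hω]
  -- apply the auxiliary lemma twice
  have key1 : ∫ ω, (π (X ω))⁻¹ *
      (A.indicator (fun _ => (1:ℝ)) ω * B.indicator (fun _ => (1:ℝ)) ω) ∂P
      = (P B).toReal := by
    refine aux_weighted_integral (MeasurableSpace.comap X inferInstance) hm P hA hB (hπX.inv.stronglyMeasurable) (c := ε⁻¹)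
      (fun ω => ?_) hprod1 ?_
    · rw [abs_of_pos (inv_pos.mpr (hπpos ω))]
      exact inv_anti₀ hεpos (hπbd (X ω)).1
    · filter_upwards [hcondA] with ω hω
      rw [hω]
      exact inv_mul_cancel₀ (ne_of_gt (hπpos ω))
  have key0 : ∫ ω, (1 - π (X ω))⁻¹ *
      (A'.indicator (fun _ => (1:ℝ)) ω * B'.indicator (fun _ => (1:ℝ)) ω) ∂P
      = (P B').toReal := by
    refine aux_weighted_integral (MeasurableSpace.comap X inferInstance) hm P hA' hB'
      (((hπX.const_sub (1:ℝ)).inv).stronglyMeasurable) (c := ε⁻¹)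
      (fun ω => ?_) hprod0 ?_
    · rw [abs_of_pos (inv_pos.mpr (h1πpos ω))]
      refine inv_anti₀ hεpos ?_
      have := (hπbd (X ω)).2; linarith
    · filter_upwards [hcondA'] with ω hω
      rw [hω]
      exact inv_mul_cancel₀ (ne_of_gt (h1πpos ω))
  -- pointwise decomposition of H * W
  have hHW : ∀ ω, H ω * W ω
      = (π (X ω))⁻¹ * (Z ω * W1 ω) - (1 - π (X ω))⁻¹ * ((1 - Z ω) * W0 ω) := by
    intro ω
    have h1 : π (X ω) ≠ 0 := ne_of_gt (hπpos ω)
    have h2 : 1 - π (X ω) ≠ 0 := ne_of_gt (h1πpos ω)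
    rw [hH, hWdef]
    rcases hZbin ω with h | h <;> rw [h] <;> field_simp <;> ring
  -- integrability of the two pieces
  have hf1meas : AEStronglyMeasurable (fun ω => (π (X ω))⁻¹ * (Z ω * W1 ω)) P :=
    (((hπ.comp hX).inv).mul (hZ.mul hW1)).aestronglyMeasurable
  have hf2meas : AEStronglyMeasurable (fun ω => (1 - π (X ω))⁻¹ * ((1 - Z ω) * W0 ω)) P :=
    (((measurable_const.sub (hπ.comp hX)).inv).mul
      ((measurable_const.sub hZ).mul hW0)).aestronglyMeasurable
  have hbd1 : ∀ ω, ‖(π (X ω))⁻¹ * (Z ω * W1 ω)‖ ≤ ε⁻¹ := by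
    intro ω
    rw [norm_mul, norm_mul]
    have hπinv : ‖(π (X ω))⁻¹‖ ≤ ε⁻¹ := by
      rw [Real.norm_eq_abs, abs_of_pos (inv_pos.mpr (hπpos ω))]
      exact inv_anti₀ hεpos (hπbd (X ω)).1
    have hZ1 : ‖Z ω‖ ≤ 1 := by rcases hZbin ω with h | h <;> simp [h]
    have hW11 : ‖W1 ω‖ ≤ 1 := by rcases hW1bin ω with h | h <;> simp [h]
    calc ‖(π (X ω))⁻¹‖ * (‖Z ω‖ * ‖W1 ω‖) ≤ ε⁻¹ * (1 * 1) := by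
          refine mul_le_mul hπinv ?_ (by positivity) (by positivity)
          exact mul_le_mul hZ1 hW11 (norm_nonneg _) zero_le_one
      _ = ε⁻¹ := by ring
  have hbd2 : ∀ ω, ‖(1 - π (X ω))⁻¹ * ((1 - Z ω) * W0 ω)‖ ≤ ε⁻¹ := by
    intro ω
    rw [norm_mul, norm_mul]
    have hπinv : ‖(1 - π (X ω))⁻¹‖ ≤ ε⁻¹ := by
      rw [Real.norm_eq_abs, abs_of_pos (inv_pos.mpr (h1πpos ω))]
      refine inv_anti₀ hεpos ?_
      have := (hπbd (X ω)).2; linarith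
    have hZ1 : ‖1 - Z ω‖ ≤ 1 := by rcases hZbin ω with h | h <;> simp [h]
    have hW01 : ‖W0 ω‖ ≤ 1 := by rcases hW0bin ω with h | h <;> simp [h]
    calc ‖(1 - π (X ω))⁻¹‖ * (‖1 - Z ω‖ * ‖W0 ω‖) ≤ ε⁻¹ * (1 * 1) := by
          refine mul_le_mul hπinv ?_ (by positivity) (by positivity)
          exact mul_le_mul hZ1 hW01 (norm_nonneg _) zero_le_one
      _ = ε⁻¹ := by ring
  have hf1int : Integrable (fun ω => (π (X ω))⁻¹ * (Z ω * W1 ω)) P :=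
    Integrable.mono' (integrable_const ε⁻¹) hf1meas (Filter.Eventually.of_forall hbd1)
  have hf2int : Integrable (fun ω => (1 - π (X ω))⁻¹ * ((1 - Z ω) * W0 ω)) P :=
    Integrable.mono' (integrable_const ε⁻¹) hf2meas (Filter.Eventually.of_forall hbd2)
  -- put everything together
  have hsplit : ∫ ω, H ω * W ω ∂P = (P B).toReal - (P B').toReal := by
    have : ∫ ω, H ω * W ω ∂P
        = ∫ ω, ((π (X ω))⁻¹ * (Z ω * W1 ω) - (1 - π (X ω))⁻¹ * ((1 - Z ω) * W0 ω)) ∂P :=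
      integral_congr_ae (Filter.Eventually.of_forall fun ω => hHW ω)
    rw [this, integral_sub hf1int hf2int, ← key1, ← key0]
    congr 1
    · refine integral_congr_ae (Filter.Eventually.of_forall fun ω => ?_)
      simp only [hZind ω, hW1ind ω]
    · refine integral_congr_ae (Filter.Eventually.of_forall fun ω => ?_)
      simp only [h1Zind ω, hW0ind ω]
  rw [hsplit]
  -- now show (P B).toReal - (P B').toReal = (P {W0 < W1}).toReal
  have hW1int : Integrable W1 P := by
    refine Integrable.mono' (integrable_const (1:ℝ)) hW1.aestronglyMeasurable
      (Filter.Eventually.of_forall fun ω => ?_)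
    rcases hW1bin ω with h | h <;> simp [h]
  have hW0int : Integrable W0 P := by
    refine Integrable.mono' (integrable_const (1:ℝ)) hW0.aestronglyMeasurable
      (Filter.Eventually.of_forall fun ω => ?_)
    rcases hW0bin ω with h | h <;> simp [h]
  have hPB : (P B).toReal = ∫ ω, W1 ω ∂P := by
    rw [show W1 = B.indicator (fun _ => (1:ℝ)) from funext hW1ind]
    exact (integral_indicator_one hB).symm
  have hPB' : (P B').toReal = ∫ ω, W0 ω ∂P := by
    rw [show W0 = B'.indicator (fun _ => (1:ℝ)) from funext hW0ind]
    exact (integral_indicator_one hB').symm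
  have hset : MeasurableSet {ω | W0 ω < W1 ω} := measurableSet_lt hW0 hW1
  rw [hPB, hPB', ← integral_sub hW1int hW0int]
  have heq : (fun ω => W1 ω - W0 ω)
      =ᵐ[P] {ω | W0 ω < W1 ω}.indicator (fun _ => (1:ℝ)) := by
    filter_upwards [hmono] with ω hω
    rcases hW0bin ω with h0 | h0 <;> rcases hW1bin ω with h1 | h1 <;>
      simp [Set.indicator_apply, Set.mem_setOf_eq, h0, h1] <;> linarith
  rw [integral_congr_ae heq]
  exact integral_indicator_one hset
end

section
/- Assume additionally P(C) > 0. Then for every y ∈ ℝ, the covariate-adjusted D-IV-LATE is identified by the ratio of propensity-weighted moments: P(Y1 ≤ y | C) − P(Y0 ≤ y | C) = E[H·1{Y ≤ y}] / E[H·W], where P(· | C) := P(· ∩ C)/P(C). -/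
open MeasureTheory ProbabilityTheory

private lemma bdd_integrable {Ω : Type*} {mΩ : MeasurableSpace Ω} (μ : Measure Ω)
    [IsProbabilityMeasure μ] {f : Ω → ℝ} (hf : Measurable f) {c : ℝ}
    (hb : ∀ ω, |f ω| ≤ c) : Integrable f μ :=
  (integrable_const c).mono' hf.aestronglyMeasurable (Filter.Eventually.of_forall hb)

private lemma integral_indicator_one' {Ω : Type*} {mΩ : MeasurableSpace Ω} (μ : Measure Ω)
    {s : Set Ω} (hs : MeasurableSet s) :
    ∫ ω, s.indicator (fun _ => (1:ℝ)) ω ∂μ = (μ s).toReal :=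
  integral_indicator_one hs

private lemma aux_weighted {Ω γ : Type*} [mΩ : MeasurableSpace Ω] [StandardBorelSpace Ω]
    [mγ : MeasurableSpace γ]
    (μ : Measure Ω) [IsProbabilityMeasure μ]
    {Z : Ω → ℝ} {V : Ω → γ} (hZ : Measurable[mΩ] Z) (hV : Measurable[mΩ] V)
    {m : MeasurableSpace Ω} (hm : m ≤ mΩ)
    (hci : CondIndepFun m hm Z V μ)
    {s' : Set ℝ} (hs' : MeasurableSet s') {t' : Set γ} (ht' : MeasurableSet t')
    {q : Ω → ℝ} (hq : StronglyMeasurable[m] q)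
    {ε : ℝ} (hε : 0 < ε) (hqbd : ∀ ω, ε ≤ q ω)
    (hqver : (μ⟦Z ⁻¹' s' | m⟧) =ᵐ[μ] q) :
    ∫ ω, (Z ⁻¹' s').indicator (fun _ => (1:ℝ)) ω * (V ⁻¹' t').indicator (fun _ => (1:ℝ)) ω / q ω ∂μ
      = (μ (V ⁻¹' t')).toReal := by
  have hs : MeasurableSet[mΩ] (Z ⁻¹' s') := hZ hs'
  have ht : MeasurableSet[mΩ] (V ⁻¹' t') := hV ht'
  have hst : MeasurableSet[mΩ] (Z ⁻¹' s' ∩ V ⁻¹' t') := hs.inter ht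
  have hq0 : ∀ ω, q ω ≠ 0 := fun ω => ne_of_gt (lt_of_lt_of_le hε (hqbd ω))
  set g : Ω → ℝ := fun ω => (q ω)⁻¹ with hg_def
  set f : Ω → ℝ := (Z ⁻¹' s' ∩ V ⁻¹' t').indicator (fun _ => (1:ℝ)) with hf_def
  have hg_sm : StronglyMeasurable[m] g := (hq.measurable.inv).stronglyMeasurable
  have hg_meas : Measurable[mΩ] g := (hq.measurable.mono hm le_rfl).inv
  have hf_meas : Measurable[mΩ] f := measurable_const.indicator hst
  have habs : ∀ (S : Set Ω) (ω : Ω), |S.indicator (fun _ => (1:ℝ)) ω| ≤ 1 := by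
    intro S ω
    by_cases hmem : ω ∈ S <;> simp [Set.indicator_of_mem, Set.indicator_of_notMem, hmem]
  have hf_int : Integrable f μ := bdd_integrable μ hf_meas (c := 1) (habs _)
  have hgf_int : Integrable (g * f) μ := by
    refine bdd_integrable μ (hg_meas.mul hf_meas) (c := ε⁻¹) fun ω => ?_
    have h1 : |g ω| ≤ ε⁻¹ := by
      rw [abs_of_nonneg (inv_nonneg.mpr (le_of_lt (lt_of_lt_of_le hε (hqbd ω))))]
      exact inv_anti₀ hε (hqbd ω)
    calc |(g * f) ω| = |g ω| * |f ω| := abs_mul _ _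
      _ ≤ ε⁻¹ * 1 := mul_le_mul h1 (habs _ ω) (abs_nonneg _) (le_of_lt (inv_pos.mpr hε))
      _ = ε⁻¹ := mul_one _
  have h_eq_fun : (fun ω => (Z ⁻¹' s').indicator (fun _ => (1:ℝ)) ω *
      (V ⁻¹' t').indicator (fun _ => (1:ℝ)) ω / q ω) = g * f := by
    funext ω
    simp only [hf_def, Pi.mul_apply, hg_def]
    by_cases h1 : ω ∈ Z ⁻¹' s' <;> by_cases h2 : ω ∈ V ⁻¹' t' <;>
      simp [h1, h2, Set.indicator_of_mem, Set.indicator_of_notMem, Set.mem_inter_iff,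
        div_eq_inv_mul]
  rw [h_eq_fun]
  have e1 : μ[g * f|m] =ᵐ[μ] g * μ[f|m] :=
    condExp_mul_of_stronglyMeasurable_left hg_sm hgf_int hf_int
  have e2 : (μ⟦Z ⁻¹' s' ∩ V ⁻¹' t'|m⟧) =ᵐ[μ]
      fun ω => (μ⟦Z ⁻¹' s'|m⟧) ω * (μ⟦V ⁻¹' t'|m⟧) ω :=
    ((condIndepFun_iff_condExp_inter_preimage_eq_mul hZ hV).mp hci) s' t' hs' ht'
  have e3 : g * μ[f|m] =ᵐ[μ] μ⟦V ⁻¹' t'|m⟧ := by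
    filter_upwards [e2, hqver] with ω h2 hv
    show (q ω)⁻¹ * (μ⟦Z ⁻¹' s' ∩ V ⁻¹' t'|m⟧) ω = _
    rw [h2, hv, ← mul_assoc, inv_mul_cancel₀ (hq0 ω), one_mul]
  calc ∫ ω, (g * f) ω ∂μ = ∫ ω, (μ[g * f|m]) ω ∂μ := (integral_condExp hm).symm
    _ = ∫ ω, (μ⟦V ⁻¹' t'|m⟧) ω ∂μ := integral_congr_ae (μ := μ) (e1.trans e3)
    _ = ∫ ω, (V ⁻¹' t').indicator (fun _ => (1:ℝ)) ω ∂μ := integral_condExp hm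
    _ = (μ (V ⁻¹' t')).toReal := integral_indicator_one' μ ht

private lemma ind_integrable {Ω : Type*} {mΩ : MeasurableSpace Ω} (μ : Measure Ω)
    [IsProbabilityMeasure μ] {s : Set Ω} (hs : MeasurableSet s) :
    Integrable (fun ω => s.indicator (fun _ => (1:ℝ)) ω) μ :=
  bdd_integrable μ (measurable_const.indicator hs) (c := 1) (fun ω => by
    by_cases h : ω ∈ s <;> simp [h, Set.indicator_of_mem, Set.indicator_of_notMem])

private lemma ind_div_bound {Ω : Type*} (S T : Set Ω) (p : Ω → ℝ) {ε : ℝ} (hε : 0 < ε)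
    (hp : ∀ ω, ε ≤ p ω) (ω : Ω) :
    |S.indicator (fun _ => (1:ℝ)) ω * T.indicator (fun _ => (1:ℝ)) ω / p ω| ≤ ε⁻¹ := by
  have hppos : 0 < p ω := lt_of_lt_of_le hε (hp ω)
  by_cases h1 : ω ∈ S <;> by_cases h2 : ω ∈ T <;>
    simp only [h1, h2, Set.indicator_of_mem, Set.indicator_of_notMem, zero_mul, mul_zero,
      mul_one, one_mul, zero_div, abs_zero, not_false_iff]
  · rw [abs_div, abs_one, abs_of_pos hppos, one_div]
    exact inv_anti₀ hε (hp ω)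
  all_goals positivity

set_option maxHeartbeats 1000000 in
/-- The covariate-adjusted D-IV-LATE is identified by the ratio of propensity-weighted
moments: `P(Y1 ≤ y | C) − P(Y0 ≤ y | C) = E[H·1{Y ≤ y}] / E[H·W]`. -/
theorem d_iv_late_ratio_of_weighted_moments
    {Ω : Type*} [MeasurableSpace Ω] [StandardBorelSpace Ω] {d : ℕ}
    (P : Measure Ω) [IsProbabilityMeasure P]
    (X : Ω → (Fin d → ℝ)) (hX : Measurable X)
    (Z W0 W1 Y0 Y1 : Ω → ℝ)
    (hZ : Measurable Z) (hW0 : Measurable W0) (hW1 : Measurable W1)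
    (hY0 : Measurable Y0) (hY1 : Measurable Y1)
    (hZbin : ∀ ω, Z ω = 0 ∨ Z ω = 1)
    (hW0bin : ∀ ω, W0 ω = 0 ∨ W0 ω = 1)
    (hW1bin : ∀ ω, W1 ω = 0 ∨ W1 ω = 1)
    (W Y : Ω → ℝ)
    (hWdef : ∀ ω, W ω = Z ω * W1 ω + (1 - Z ω) * W0 ω)
    (hYdef : ∀ ω, Y ω = W ω * Y1 ω + (1 - W ω) * Y0 ω)
    (hcondindep : CondIndepFun (MeasurableSpace.comap X inferInstance) hX.comap_le
      Z (fun ω => (Y0 ω, Y1 ω, W0 ω, W1 ω)) P)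
    (hmono : ∀ᵐ ω ∂P, W0 ω ≤ W1 ω)
    (ε : ℝ) (hε : 0 < ε ∧ ε < 1 / 2)
    (π : (Fin d → ℝ) → ℝ) (hπ : Measurable π) (hπbd : ∀ x, ε ≤ π x ∧ π x ≤ 1 - ε)
    (hπver : P[Z | MeasurableSpace.comap X inferInstance] =ᵐ[P] fun ω => π (X ω))
    (H : Ω → ℝ) (hH : ∀ ω, H ω = (Z ω - π (X ω)) / (π (X ω) * (1 - π (X ω))))
    (hC : 0 < P {ω | W0 ω < W1 ω}) :
    ∀ y : ℝ,
      (P ({ω | Y1 ω ≤ y} ∩ {ω | W0 ω < W1 ω})).toReal / (P {ω | W0 ω < W1 ω}).toReal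
        - (P ({ω | Y0 ω ≤ y} ∩ {ω | W0 ω < W1 ω})).toReal / (P {ω | W0 ω < W1 ω}).toReal
      = (∫ ω, H ω * (if Y ω ≤ y then (1 : ℝ) else 0) ∂P) / (∫ ω, H ω * W ω ∂P) := by
  intro y
  obtain ⟨hε0, hε2⟩ := hε
  -- basic facts about π
  have hπpos : ∀ x, 0 < π x := fun x => lt_of_lt_of_le hε0 (hπbd x).1
  have h1πpos : ∀ x, 0 < 1 - π x := fun x => by have := (hπbd x).2; linarith
  have hπne : ∀ x, π x ≠ 0 := fun x => ne_of_gt (hπpos x)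
  have h1πne : ∀ x, (1 : ℝ) - π x ≠ 0 := fun x => ne_of_gt (h1πpos x)
  have hεle1π : ∀ x, ε ≤ 1 - π x := fun x => by have := (hπbd x).2; linarith
  -- notation
  set V : Ω → ℝ × ℝ × ℝ × ℝ := fun ω => (Y0 ω, Y1 ω, W0 ω, W1 ω) with hV_def
  have hV : Measurable V := (hY0.prodMk (hY1.prodMk (hW0.prodMk hW1)))
  set T1 : Set (ℝ × ℝ × ℝ × ℝ) := {v | v.2.2.2 * v.2.1 + (1 - v.2.2.2) * v.1 ≤ y} with hT1_def
  set T0 : Set (ℝ × ℝ × ℝ × ℝ) := {v | v.2.2.1 * v.2.1 + (1 - v.2.2.1) * v.1 ≤ y} with hT0_def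
  set Tw1 : Set (ℝ × ℝ × ℝ × ℝ) := {v | v.2.2.2 = 1} with hTw1_def
  set Tw0 : Set (ℝ × ℝ × ℝ × ℝ) := {v | v.2.2.1 = 1} with hTw0_def
  have hT1 : MeasurableSet T1 :=
    measurableSet_le ((measurable_snd.snd.snd.mul measurable_snd.fst).add
      ((measurable_const.sub measurable_snd.snd.snd).mul measurable_fst)) measurable_const
  have hT0 : MeasurableSet T0 :=
    measurableSet_le ((measurable_snd.snd.fst.mul measurable_snd.fst).add
      ((measurable_const.sub measurable_snd.snd.fst).mul measurable_fst)) measurable_const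
  have hTw1 : MeasurableSet Tw1 := measurable_snd.snd.snd (measurableSet_singleton 1)
  have hTw0 : MeasurableSet Tw0 := measurable_snd.snd.fst (measurableSet_singleton 1)
  set C : Set Ω := {ω | W0 ω < W1 ω} with hC_def
  have hCmeas : MeasurableSet C := measurableSet_lt hW0 hW1
  -- measurability w.r.t. the comap σ-algebra
  have hXm : Measurable[MeasurableSpace.comap X inferInstance] X := fun s hs => ⟨s, hs, rfl⟩
  have hq1 : StronglyMeasurable[MeasurableSpace.comap X inferInstance] (fun ω => π (X ω)) :=
    (hπ.comp hXm).stronglyMeasurable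
  have hq0 : StronglyMeasurable[MeasurableSpace.comap X inferInstance]
      (fun ω => 1 - π (X ω)) :=
    (measurable_const.sub (hπ.comp hXm)).stronglyMeasurable
  have hZint : Integrable Z P := bdd_integrable P hZ (c := 1) (fun ω => by
    rcases hZbin ω with h | h <;> simp [h])
  -- conditional expectation of indicators of Z-preimages
  have hind1 : (Z ⁻¹' ({1} : Set ℝ)).indicator (fun _ => (1:ℝ)) = Z := by
    funext ω
    rcases hZbin ω with h | h <;>
      simp [Set.indicator_apply, Set.mem_preimage, h]
  have hind0 : (Z ⁻¹' ({0} : Set ℝ)).indicator (fun _ => (1:ℝ)) = fun ω => 1 - Z ω := by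
    funext ω
    rcases hZbin ω with h | h <;>
      simp [Set.indicator_apply, Set.mem_preimage, h]
  have hqver1 : (P⟦Z ⁻¹' ({1} : Set ℝ) | MeasurableSpace.comap X inferInstance⟧)
      =ᵐ[P] fun ω => π (X ω) := by
    rw [hind1]; exact hπver
  have hqver0 : (P⟦Z ⁻¹' ({0} : Set ℝ) | MeasurableSpace.comap X inferInstance⟧)
      =ᵐ[P] fun ω => 1 - π (X ω) := by
    rw [hind0]
    have h1 := condExp_sub (μ := P) (m := MeasurableSpace.comap X inferInstance)
      (integrable_const (1:ℝ)) hZint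
    have h2 := condExp_const (μ := P) hX.comap_le (1:ℝ)
    filter_upwards [h1, hπver] with ω e1 e3
    have e1' : (P[(fun ω => 1 - Z ω) | MeasurableSpace.comap X inferInstance]) ω
        = ((P[(fun _ => (1:ℝ)) | MeasurableSpace.comap X inferInstance])
          - (P[Z | MeasurableSpace.comap X inferInstance])) ω := e1
    rw [e1', Pi.sub_apply, congrFun h2 ω, e3]
  -- the four weighted-moment identities
  have haux1 : ∫ ω, (Z ⁻¹' ({1} : Set ℝ)).indicator (fun _ => (1:ℝ)) ω *
      (V ⁻¹' T1).indicator (fun _ => (1:ℝ)) ω / (π (X ω)) ∂P = (P (V ⁻¹' T1)).toReal :=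
    aux_weighted P hZ hV hX.comap_le hcondindep (measurableSet_singleton 1) hT1 hq1 hε0
      (fun ω => (hπbd (X ω)).1) hqver1
  have haux2 : ∫ ω, (Z ⁻¹' ({0} : Set ℝ)).indicator (fun _ => (1:ℝ)) ω *
      (V ⁻¹' T0).indicator (fun _ => (1:ℝ)) ω / (1 - π (X ω)) ∂P = (P (V ⁻¹' T0)).toReal :=
    aux_weighted P hZ hV hX.comap_le hcondindep (measurableSet_singleton 0) hT0 hq0 hε0
      (fun ω => hεle1π (X ω)) hqver0
  have haux3 : ∫ ω, (Z ⁻¹' ({1} : Set ℝ)).indicator (fun _ => (1:ℝ)) ω *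
      (V ⁻¹' Tw1).indicator (fun _ => (1:ℝ)) ω / (π (X ω)) ∂P = (P (V ⁻¹' Tw1)).toReal :=
    aux_weighted P hZ hV hX.comap_le hcondindep (measurableSet_singleton 1) hTw1 hq1 hε0
      (fun ω => (hπbd (X ω)).1) hqver1
  have haux4 : ∫ ω, (Z ⁻¹' ({0} : Set ℝ)).indicator (fun _ => (1:ℝ)) ω *
      (V ⁻¹' Tw0).indicator (fun _ => (1:ℝ)) ω / (1 - π (X ω)) ∂P = (P (V ⁻¹' Tw0)).toReal :=
    aux_weighted P hZ hV hX.comap_le hcondindep (measurableSet_singleton 0) hTw0 hq0 hε0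
      (fun ω => hεle1π (X ω)) hqver0
  -- integrability of the four weighted integrands
  have hmeasπX : Measurable (fun ω => π (X ω)) := hπ.comp hX
  have int1 : Integrable (fun ω => (Z ⁻¹' ({1} : Set ℝ)).indicator (fun _ => (1:ℝ)) ω *
      (V ⁻¹' T1).indicator (fun _ => (1:ℝ)) ω / (π (X ω))) P :=
    bdd_integrable P (((measurable_const.indicator (hZ (measurableSet_singleton 1))).mul
      (measurable_const.indicator (hV hT1))).div hmeasπX)
      (ind_div_bound _ _ _ hε0 (fun ω => (hπbd (X ω)).1))
  have int2 : Integrable (fun ω => (Z ⁻¹' ({0} : Set ℝ)).indicator (fun _ => (1:ℝ)) ω *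
      (V ⁻¹' T0).indicator (fun _ => (1:ℝ)) ω / (1 - π (X ω))) P :=
    bdd_integrable P (((measurable_const.indicator (hZ (measurableSet_singleton 0))).mul
      (measurable_const.indicator (hV hT0))).div (measurable_const.sub hmeasπX))
      (ind_div_bound _ _ _ hε0 (fun ω => hεle1π (X ω)))
  have int3 : Integrable (fun ω => (Z ⁻¹' ({1} : Set ℝ)).indicator (fun _ => (1:ℝ)) ω *
      (V ⁻¹' Tw1).indicator (fun _ => (1:ℝ)) ω / (π (X ω))) P :=
    bdd_integrable P (((measurable_const.indicator (hZ (measurableSet_singleton 1))).mul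
      (measurable_const.indicator (hV hTw1))).div hmeasπX)
      (ind_div_bound _ _ _ hε0 (fun ω => (hπbd (X ω)).1))
  have int4 : Integrable (fun ω => (Z ⁻¹' ({0} : Set ℝ)).indicator (fun _ => (1:ℝ)) ω *
      (V ⁻¹' Tw0).indicator (fun _ => (1:ℝ)) ω / (1 - π (X ω))) P :=
    bdd_integrable P (((measurable_const.indicator (hZ (measurableSet_singleton 0))).mul
      (measurable_const.indicator (hV hTw0))).div (measurable_const.sub hmeasπX))
      (ind_div_bound _ _ _ hε0 (fun ω => hεle1π (X ω)))
  -- pointwise identity for the numerator integrand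
  have hnum_pt : ∀ ω, H ω * (if Y ω ≤ y then (1:ℝ) else 0) =
      (Z ⁻¹' ({1} : Set ℝ)).indicator (fun _ => (1:ℝ)) ω *
        (V ⁻¹' T1).indicator (fun _ => (1:ℝ)) ω / (π (X ω)) -
      (Z ⁻¹' ({0} : Set ℝ)).indicator (fun _ => (1:ℝ)) ω *
        (V ⁻¹' T0).indicator (fun _ => (1:ℝ)) ω / (1 - π (X ω)) := by
    intro ω
    rcases hZbin ω with hz | hz
    · have hw : W ω = W0 ω := by rw [hWdef ω, hz]; ring
      have hy' : Y ω = W0 ω * Y1 ω + (1 - W0 ω) * Y0 ω := by rw [hYdef ω, hw]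
      have hm1 : ω ∉ Z ⁻¹' ({1} : Set ℝ) := by simp [Set.mem_preimage, hz]
      have hm0 : ω ∈ Z ⁻¹' ({0} : Set ℝ) := by simp [Set.mem_preimage, hz]
      have hT0mem : (ω ∈ V ⁻¹' T0) ↔ Y ω ≤ y := by rw [hy']; exact Iff.rfl
      rw [hH ω, hz, Set.indicator_of_notMem hm1, Set.indicator_of_mem hm0]
      by_cases hy : Y ω ≤ y
      · rw [if_pos hy, Set.indicator_of_mem (hT0mem.mpr hy)]
        field_simp [hπne (X ω), h1πne (X ω)] <;> ring
      · rw [if_neg hy, Set.indicator_of_notMem (fun hmem => hy (hT0mem.mp hmem))]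
        ring
    · have hw : W ω = W1 ω := by rw [hWdef ω, hz]; ring
      have hy' : Y ω = W1 ω * Y1 ω + (1 - W1 ω) * Y0 ω := by rw [hYdef ω, hw]
      have hm1 : ω ∈ Z ⁻¹' ({1} : Set ℝ) := by simp [Set.mem_preimage, hz]
      have hm0 : ω ∉ Z ⁻¹' ({0} : Set ℝ) := by simp [Set.mem_preimage, hz]
      have hT1mem : (ω ∈ V ⁻¹' T1) ↔ Y ω ≤ y := by rw [hy']; exact Iff.rfl
      rw [hH ω, hz, Set.indicator_of_mem hm1, Set.indicator_of_notMem hm0]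
      by_cases hy : Y ω ≤ y
      · rw [if_pos hy, Set.indicator_of_mem (hT1mem.mpr hy)]
        field_simp [hπne (X ω), h1πne (X ω)] <;> ring
      · rw [if_neg hy, Set.indicator_of_notMem (fun hmem => hy (hT1mem.mp hmem))]
        ring
  -- pointwise identity for the denominator integrand
  have hden_pt : ∀ ω, H ω * W ω =
      (Z ⁻¹' ({1} : Set ℝ)).indicator (fun _ => (1:ℝ)) ω *
        (V ⁻¹' Tw1).indicator (fun _ => (1:ℝ)) ω / (π (X ω)) -
      (Z ⁻¹' ({0} : Set ℝ)).indicator (fun _ => (1:ℝ)) ω *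
        (V ⁻¹' Tw0).indicator (fun _ => (1:ℝ)) ω / (1 - π (X ω)) := by
    intro ω
    rcases hZbin ω with hz | hz
    · have hw : W ω = W0 ω := by rw [hWdef ω, hz]; ring
      have hm1 : ω ∉ Z ⁻¹' ({1} : Set ℝ) := by simp [Set.mem_preimage, hz]
      have hm0 : ω ∈ Z ⁻¹' ({0} : Set ℝ) := by simp [Set.mem_preimage, hz]
      have hTw0mem : (ω ∈ V ⁻¹' Tw0) ↔ W0 ω = 1 := Iff.rfl
      rw [hH ω, hz, hw, Set.indicator_of_notMem hm1, Set.indicator_of_mem hm0]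
      rcases hW0bin ω with h | h
      · have hnm : ω ∉ V ⁻¹' Tw0 := by
          intro hmem
          have h2 := hTw0mem.mp hmem
          rw [h] at h2; norm_num at h2
        rw [h, Set.indicator_of_notMem hnm]
        ring
      · rw [h, Set.indicator_of_mem (hTw0mem.mpr h)]
        field_simp [hπne (X ω), h1πne (X ω)] <;> ring
    · have hw : W ω = W1 ω := by rw [hWdef ω, hz]; ring
      have hm1 : ω ∈ Z ⁻¹' ({1} : Set ℝ) := by simp [Set.mem_preimage, hz]
      have hm0 : ω ∉ Z ⁻¹' ({0} : Set ℝ) := by simp [Set.mem_preimage, hz]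
      have hTw1mem : (ω ∈ V ⁻¹' Tw1) ↔ W1 ω = 1 := Iff.rfl
      rw [hH ω, hz, hw, Set.indicator_of_notMem hm0, Set.indicator_of_mem hm1]
      rcases hW1bin ω with h | h
      · have hnm : ω ∉ V ⁻¹' Tw1 := by
          intro hmem
          have h2 := hTw1mem.mp hmem
          rw [h] at h2; norm_num at h2
        rw [h, Set.indicator_of_notMem hnm]
        ring
      · rw [h, Set.indicator_of_mem (hTw1mem.mpr h)]
        field_simp [hπne (X ω), h1πne (X ω)] <;> ring
  -- measure identity for the numerator
  have hS1 : MeasurableSet ({ω | Y1 ω ≤ y} ∩ C) :=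
    (measurableSet_le hY1 measurable_const).inter hCmeas
  have hS0 : MeasurableSet ({ω | Y0 ω ≤ y} ∩ C) :=
    (measurableSet_le hY0 measurable_const).inter hCmeas
  have hae1 : (fun ω => (V ⁻¹' T1).indicator (fun _ => (1:ℝ)) ω
        - (V ⁻¹' T0).indicator (fun _ => (1:ℝ)) ω)
      =ᵐ[P] (fun ω => ({ω | Y1 ω ≤ y} ∩ C).indicator (fun _ => (1:ℝ)) ω
        - ({ω | Y0 ω ≤ y} ∩ C).indicator (fun _ => (1:ℝ)) ω) := by
    filter_upwards [hmono] with ω hω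
    rcases hW0bin ω with h0 | h0 <;> rcases hW1bin ω with h1 | h1
    · have c1 : (ω ∈ V ⁻¹' T1) ↔ Y0 ω ≤ y := by
        simp only [hV_def, hT1_def, Set.mem_preimage, Set.mem_setOf_eq, h1]; norm_num
      have c0 : (ω ∈ V ⁻¹' T0) ↔ Y0 ω ≤ y := by
        simp only [hV_def, hT0_def, Set.mem_preimage, Set.mem_setOf_eq, h0]; norm_num
      have cc : ω ∉ C := by simp [hC_def, h0, h1]
      have n1 : ω ∉ ({ω | Y1 ω ≤ y} ∩ C) := fun hm => cc hm.2
      have n0 : ω ∉ ({ω | Y0 ω ≤ y} ∩ C) := fun hm => cc hm.2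
      rw [Set.indicator_of_notMem n1, Set.indicator_of_notMem n0]
      by_cases hy : Y0 ω ≤ y
      · rw [Set.indicator_of_mem (c1.mpr hy), Set.indicator_of_mem (c0.mpr hy)]; norm_num
      · have m1 : ω ∉ V ⁻¹' T1 := fun hm => hy (c1.mp hm)
        have m0 : ω ∉ V ⁻¹' T0 := fun hm => hy (c0.mp hm)
        rw [Set.indicator_of_notMem m1, Set.indicator_of_notMem m0]
    · have c1 : (ω ∈ V ⁻¹' T1) ↔ Y1 ω ≤ y := by
        simp only [hV_def, hT1_def, Set.mem_preimage, Set.mem_setOf_eq, h1]; norm_num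
      have c0 : (ω ∈ V ⁻¹' T0) ↔ Y0 ω ≤ y := by
        simp only [hV_def, hT0_def, Set.mem_preimage, Set.mem_setOf_eq, h0]; norm_num
      have cc : ω ∈ C := by simp [hC_def, h0, h1]
      by_cases hy1 : Y1 ω ≤ y <;> by_cases hy0 : Y0 ω ≤ y
      · have p1 : ω ∈ ({ω | Y1 ω ≤ y} ∩ C) := ⟨hy1, cc⟩
        have p0 : ω ∈ ({ω | Y0 ω ≤ y} ∩ C) := ⟨hy0, cc⟩
        rw [Set.indicator_of_mem (c1.mpr hy1), Set.indicator_of_mem (c0.mpr hy0),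
          Set.indicator_of_mem p1, Set.indicator_of_mem p0]
      · have p1 : ω ∈ ({ω | Y1 ω ≤ y} ∩ C) := ⟨hy1, cc⟩
        have n0 : ω ∉ ({ω | Y0 ω ≤ y} ∩ C) := fun hm => hy0 hm.1
        have m0 : ω ∉ V ⁻¹' T0 := fun hm => hy0 (c0.mp hm)
        rw [Set.indicator_of_mem (c1.mpr hy1), Set.indicator_of_notMem m0,
          Set.indicator_of_mem p1, Set.indicator_of_notMem n0]
      · have n1 : ω ∉ ({ω | Y1 ω ≤ y} ∩ C) := fun hm => hy1 hm.1
        have p0 : ω ∈ ({ω | Y0 ω ≤ y} ∩ C) := ⟨hy0, cc⟩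
        have m1 : ω ∉ V ⁻¹' T1 := fun hm => hy1 (c1.mp hm)
        rw [Set.indicator_of_notMem m1, Set.indicator_of_mem (c0.mpr hy0),
          Set.indicator_of_notMem n1, Set.indicator_of_mem p0]
      · have n1 : ω ∉ ({ω | Y1 ω ≤ y} ∩ C) := fun hm => hy1 hm.1
        have n0 : ω ∉ ({ω | Y0 ω ≤ y} ∩ C) := fun hm => hy0 hm.1
        have m1 : ω ∉ V ⁻¹' T1 := fun hm => hy1 (c1.mp hm)
        have m0 : ω ∉ V ⁻¹' T0 := fun hm => hy0 (c0.mp hm)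
        rw [Set.indicator_of_notMem m1, Set.indicator_of_notMem m0,
          Set.indicator_of_notMem n1, Set.indicator_of_notMem n0]
    · exfalso; rw [h0, h1] at hω; norm_num at hω
    · have c1 : (ω ∈ V ⁻¹' T1) ↔ Y1 ω ≤ y := by
        simp only [hV_def, hT1_def, Set.mem_preimage, Set.mem_setOf_eq, h1]; norm_num
      have c0 : (ω ∈ V ⁻¹' T0) ↔ Y1 ω ≤ y := by
        simp only [hV_def, hT0_def, Set.mem_preimage, Set.mem_setOf_eq, h0]; norm_num
      have cc : ω ∉ C := by simp [hC_def, h0, h1]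
      have n1 : ω ∉ ({ω | Y1 ω ≤ y} ∩ C) := fun hm => cc hm.2
      have n0 : ω ∉ ({ω | Y0 ω ≤ y} ∩ C) := fun hm => cc hm.2
      rw [Set.indicator_of_notMem n1, Set.indicator_of_notMem n0]
      by_cases hy : Y1 ω ≤ y
      · rw [Set.indicator_of_mem (c1.mpr hy), Set.indicator_of_mem (c0.mpr hy)]; norm_num
      · have m1 : ω ∉ V ⁻¹' T1 := fun hm => hy (c1.mp hm)
        have m0 : ω ∉ V ⁻¹' T0 := fun hm => hy (c0.mp hm)
        rw [Set.indicator_of_notMem m1, Set.indicator_of_notMem m0]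
  have key1 : (P (V ⁻¹' T1)).toReal - (P (V ⁻¹' T0)).toReal
      = (P ({ω | Y1 ω ≤ y} ∩ C)).toReal - (P ({ω | Y0 ω ≤ y} ∩ C)).toReal := by
    rw [← integral_indicator_one' P (hV hT1), ← integral_indicator_one' P (hV hT0),
      ← integral_indicator_one' P hS1, ← integral_indicator_one' P hS0,
      ← integral_sub (ind_integrable P (hV hT1)) (ind_integrable P (hV hT0)),
      ← integral_sub (ind_integrable P hS1) (ind_integrable P hS0)]
    exact integral_congr_ae (μ := P) hae1
  -- measure identity for the denominator
  have hae2 : (fun ω => (V ⁻¹' Tw1).indicator (fun _ => (1:ℝ)) ω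
        - (V ⁻¹' Tw0).indicator (fun _ => (1:ℝ)) ω)
      =ᵐ[P] (fun ω => C.indicator (fun _ => (1:ℝ)) ω) := by
    filter_upwards [hmono] with ω hω
    rcases hW0bin ω with h0 | h0 <;> rcases hW1bin ω with h1 | h1
    · have c1 : ω ∉ V ⁻¹' Tw1 := by
        simp [hV_def, hTw1_def, Set.mem_preimage, Set.mem_setOf_eq, h1]
      have c0 : ω ∉ V ⁻¹' Tw0 := by
        simp [hV_def, hTw0_def, Set.mem_preimage, Set.mem_setOf_eq, h0]
      have cc : ω ∉ C := by simp [hC_def, h0, h1]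
      rw [Set.indicator_of_notMem c1, Set.indicator_of_notMem c0,
        Set.indicator_of_notMem cc]
      norm_num
    · have c1 : ω ∈ V ⁻¹' Tw1 := h1
      have c0 : ω ∉ V ⁻¹' Tw0 := by
        simp [hV_def, hTw0_def, Set.mem_preimage, Set.mem_setOf_eq, h0]
      have cc : ω ∈ C := by simp [hC_def, h0, h1]
      rw [Set.indicator_of_mem c1, Set.indicator_of_notMem c0, Set.indicator_of_mem cc]
      norm_num
    · exfalso; rw [h0, h1] at hω; norm_num at hω
    · have c1 : ω ∈ V ⁻¹' Tw1 := h1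
      have c0 : ω ∈ V ⁻¹' Tw0 := h0
      have cc : ω ∉ C := by simp [hC_def, h0, h1]
      rw [Set.indicator_of_mem c1, Set.indicator_of_mem c0, Set.indicator_of_notMem cc]
      norm_num
  have key2 : (P (V ⁻¹' Tw1)).toReal - (P (V ⁻¹' Tw0)).toReal = (P C).toReal := by
    rw [← integral_indicator_one' P (hV hTw1), ← integral_indicator_one' P (hV hTw0),
      ← integral_indicator_one' P hCmeas,
      ← integral_sub (ind_integrable P (hV hTw1)) (ind_integrable P (hV hTw0))]
    exact integral_congr_ae (μ := P) hae2
  -- assemble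
  have hNum : ∫ ω, H ω * (if Y ω ≤ y then (1:ℝ) else 0) ∂P
      = (P ({ω | Y1 ω ≤ y} ∩ C)).toReal - (P ({ω | Y0 ω ≤ y} ∩ C)).toReal := by
    rw [integral_congr_ae (μ := P) (Filter.Eventually.of_forall hnum_pt),
      integral_sub int1 int2, haux1, haux2]
    exact key1
  have hDen : ∫ ω, H ω * W ω ∂P = (P C).toReal := by
    rw [integral_congr_ae (μ := P) (Filter.Eventually.of_forall hden_pt),
      integral_sub int3 int4, haux3, haux4]
    exact key2
  rw [hNum, hDen, div_sub_div_same]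
end
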